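/- arXiv:1003.2816 — 10 statements merged into one kernel-verified Lean document; each statement's English description precedes it below -/
import Mathlib

section
/- Let A be a nonnegative d×d real matrix having at least one strictly positive entry in each row, and let x, y ∈ ℝ^d be vectors with all coordinates strictly positive (so that Ax and Ay also have all coordinates strictly positive). Then D(Ax, Ay) ≤ D(x, y), where D is the Hilbert projective metric. -/
open Filter

/-- The Hilbert projective metric on strictly positive vectors in `ℝ^d`:
`D(x,y) = log max_{i,j} (x_i y_j)/(x_j y_i)`. -/
noncomputable def hilbertDist {d : ℕ} (x y : Fin d → ℝ) : ℝ :=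
  Real.log (⨆ i : Fin d, ⨆ j : Fin d, (x i * y j) / (x j * y i))

/-- A nonnegative matrix with a strictly positive entry in each row
is a weak contraction for the Hilbert projective metric. -/
theorem stmt0 {d : ℕ} (A : Matrix (Fin d) (Fin d) ℝ)
    (hA : ∀ i j, 0 ≤ A i j) (hrow : ∀ i, ∃ j, 0 < A i j)
    (x y : Fin d → ℝ) (hx : ∀ i, 0 < x i) (hy : ∀ i, 0 < y i) :
    hilbertDist (A.mulVec x) (A.mulVec y) ≤ hilbertDist x y := by
  rcases Nat.eq_zero_or_pos d with hd | hd
  · subst hd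
    simp [hilbertDist, ciSup_of_empty]
  have i0 : Fin d := ⟨0, hd⟩
  haveI : Nonempty (Fin d) := ⟨i0⟩
  set M : ℝ := ⨆ i : Fin d, ⨆ j : Fin d, (x i * y j) / (x j * y i) with hM
  have hbdd : ∀ i : Fin d, BddAbove (Set.range fun j : Fin d => (x i * y j) / (x j * y i)) :=
    fun i => Set.Finite.bddAbove (Set.finite_range _)
  have hbdd2 : BddAbove (Set.range fun i : Fin d => ⨆ j : Fin d, (x i * y j) / (x j * y i)) :=
    Set.Finite.bddAbove (Set.finite_range _)
  have hkey : ∀ k l : Fin d, (x k * y l) / (x l * y k) ≤ M := by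
    intro k l
    exact le_trans (le_ciSup (hbdd k) l) (le_ciSup hbdd2 k)
  have hM1 : 1 ≤ M := by
    have := hkey i0 i0
    rwa [div_self (mul_pos (hx i0) (hy i0)).ne'] at this
  have hmul : ∀ k l : Fin d, x k * y l ≤ M * (y k * x l) := by
    intro k l
    have h := hkey k l
    rw [div_le_iff₀ (mul_pos (hx l) (hy k))] at h
    linarith [h]
  have hAx : ∀ i, 0 < A.mulVec x i := by
    intro i
    obtain ⟨j, hj⟩ := hrow i
    exact Finset.sum_pos' (fun k _ => mul_nonneg (hA i k) (hx k).le)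
      ⟨j, Finset.mem_univ j, mul_pos hj (hx j)⟩
  have hAy : ∀ i, 0 < A.mulVec y i := by
    intro i
    obtain ⟨j, hj⟩ := hrow i
    exact Finset.sum_pos' (fun k _ => mul_nonneg (hA i k) (hy k).le)
      ⟨j, Finset.mem_univ j, mul_pos hj (hy j)⟩
  have hratio : ∀ i j : Fin d,
      (A.mulVec x i * A.mulVec y j) / (A.mulVec x j * A.mulVec y i) ≤ M := by
    intro i j
    rw [div_le_iff₀ (by have := hAx j; have := hAy i; positivity)]
    have expand : A.mulVec x i * A.mulVec y j
        = ∑ k, ∑ l, (A i k * x k) * (A j l * y l) := by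
      simp [Matrix.mulVec, dotProduct, Finset.sum_mul_sum]
    have expand2 : A.mulVec x j * A.mulVec y i
        = ∑ k, ∑ l, (A i k * y k) * (A j l * x l) := by
      rw [mul_comm]
      simp [Matrix.mulVec, dotProduct, Finset.sum_mul_sum]
    rw [expand, expand2, Finset.mul_sum]
    refine Finset.sum_le_sum fun k _ => ?_
    rw [Finset.mul_sum]
    refine Finset.sum_le_sum fun l _ => ?_
    have := hmul k l
    have h1 : (A i k * x k) * (A j l * y l) = (A i k * A j l) * (x k * y l) := by ring
    have h2 : M * ((A i k * y k) * (A j l * x l)) = (A i k * A j l) * (M * (y k * x l)) := by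
      ring
    rw [h1, h2]
    exact mul_le_mul_of_nonneg_left this (mul_nonneg (hA i k) (hA j l))
  have hsup : (⨆ i : Fin d, ⨆ j : Fin d,
      (A.mulVec x i * A.mulVec y j) / (A.mulVec x j * A.mulVec y i)) ≤ M := by
    refine ciSup_le fun i => ciSup_le fun j => hratio i j
  unfold hilbertDist
  have hpos : (0:ℝ) < ⨆ i : Fin d, ⨆ j : Fin d,
      (A.mulVec x i * A.mulVec y j) / (A.mulVec x j * A.mulVec y i) := by
    have h1 : (1:ℝ) ≤ ⨆ i : Fin d, ⨆ j : Fin d,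
        (A.mulVec x i * A.mulVec y j) / (A.mulVec x j * A.mulVec y i) := by
      have hb : ∀ i : Fin d, BddAbove (Set.range fun j : Fin d =>
          (A.mulVec x i * A.mulVec y j) / (A.mulVec x j * A.mulVec y i)) :=
        fun i => Set.Finite.bddAbove (Set.finite_range _)
      have hb2 : BddAbove (Set.range fun i : Fin d => ⨆ j : Fin d,
          (A.mulVec x i * A.mulVec y j) / (A.mulVec x j * A.mulVec y i)) :=
        Set.Finite.bddAbove (Set.finite_range _)
      have := le_trans (le_ciSup (hb i0) i0) (le_ciSup hb2 i0)
      rwa [div_self (by have := hAx i0; have := hAy i0; positivity)] at this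
    linarith
  exact Real.log_le_log hpos hsup
end

section
/- Let {A_k}_{k≥1} be a sequence of d×d real matrices with all entries strictly positive, fix m ≥ 1, and set P_m^n = A_m A_{m+1} ⋯ A_n for n ≥ m, with entries p^{(m,n)}_{k,i}. Then τ(P_m^n) → 0 as n → ∞ if and only if the products P_m^n tend to row proportionality, i.e., for every pair of row indices k, s there exists a constant a = a(k,s,m) > 0 such that for every column index i the ratio p^{(m,n)}_{k,i}/p^{(m,n)}_{s,i} converges to a as n → ∞ (the limit being independent of i). -/
/-!
If the rows of a positive matrix `A` are pairwise within Hilbert distance `δ`, then `A` contracts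
the Hilbert metric by the factor `e^δ - 1`: when `α ≤ x / y ≤ β` entrywise, the ratios
`r = Ax / Ay` satisfy `r_k - α ≤ e^δ (r_s - α)`, so every `r_k / r_s` is at most
`1 + (e^δ - 1)(1 - α / β)`, and `1 - α / β ≤ log (β / α) ≤ D(x, y)`. Conversely, testing `τ(P)` on
(limits of positive) vectors supported on two coordinates shows `2 (c + 1) / (c + 3) ≤ 3 ^ τ(P)`
for every cross ratio `c` of the rows of `P`. So `τ(P_m^n) → 0` iff the rows of `P_m^n` become
close in the Hilbert metric.

Since `P_m^{n+1} = P_m^n A_{n+1}` with `A_{n+1}` positive, each ratio `p_{k,i} / p_{s,i}` at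
step `n + 1` is an average of those at step `n`: their minimum increases and their maximum
decreases. The quotient of maximum and minimum is a cross ratio of rows `k, s`, so the two squeeze
to a common limit `a > 0` exactly when these rows become close.
-/

open Filter

/-- The Birkhoff contraction coefficient. -/
noncomputable def birkhoffCoeff {d : ℕ} (A : Matrix (Fin d) (Fin d) ℝ) : ℝ :=
  sSup {t : ℝ | ∃ x y : Fin d → ℝ, (∀ i, 0 < x i) ∧ (∀ i, 0 < y i) ∧
    0 < hilbertDist x y ∧ t = hilbertDist (A.mulVec x) (A.mulVec y) / hilbertDist x y}

/-- The forward product `P_m^n = A_m A_{m+1} ⋯ A_n`. -/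
def fwdProd {d : ℕ} (A : ℕ → Matrix (Fin d) (Fin d) ℝ) (m n : ℕ) :
    Matrix (Fin d) (Fin d) ℝ :=
  ((List.range' m (n + 1 - m)).map A).prod

open Finset Matrix Topology

lemma exists_tendsto_of_monotone_of_antitone {α β : ℕ → ℝ} (hα : Monotone α) (hβ : Antitone β)
    (hαβ : ∀ n, α n ≤ β n) (hα₀ : 0 < α 0) (hgap : ∀ b > 1, ∃ n, β n ≤ b * α n) :
    ∃ a, 0 < a ∧ Tendsto α atTop (𝓝 a) ∧ Tendsto β atTop (𝓝 a) := by
  have hα_bdd : BddAbove (Set.range α) :=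
    ⟨β 0, by rintro _ ⟨n, rfl⟩; exact (hαβ n).trans (hβ n.zero_le)⟩
  have hβ_bdd : BddBelow (Set.range β) :=
    ⟨α 0, by rintro _ ⟨n, rfl⟩; exact (hα n.zero_le).trans (hαβ n)⟩
  set a := ⨆ n, α n
  have ha : 0 < a := hα₀.trans_le (le_ciSup hα_bdd 0)
  have hlim : ⨅ n, β n = a := by
    refine le_antisymm (le_of_forall_pos_le_add fun ε hε => ?_) ?_
    · obtain ⟨n, hn⟩ := hgap (1 + ε / a) (by have := div_pos hε ha; linarith)
      calc ⨅ n, β n ≤ β n := ciInf_le hβ_bdd n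
        _ ≤ (1 + ε / a) * α n := hn
        _ ≤ (1 + ε / a) * a := by gcongr; exact le_ciSup hα_bdd n
        _ = a + ε := by field_simp
    · exact ciSup_le fun n => le_ciInf fun m =>
        (hα (le_max_left n m)).trans ((hαβ _).trans (hβ (le_max_right n m)))
  exact ⟨a, ha, tendsto_atTop_ciSup hα hα_bdd, hlim ▸ tendsto_atTop_ciInf hβ hβ_bdd⟩

lemma tendsto_nhds_zero_of_nonneg_of_eventually_le {α : Type*} {l : Filter α} {f : α → ℝ}
    (hf : ∀ a, 0 ≤ f a) (h : ∀ ε > 0, ∀ᶠ a in l, f a ≤ ε) : Tendsto f l (𝓝 0) :=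
  tendsto_order.2 ⟨fun _ hc => .of_forall fun a => hc.trans_le (hf a),
    fun ε hε => (h (ε / 2) (half_pos hε)).mono fun _ ha => ha.trans_lt (half_lt_self hε)⟩

section HilbertDist

variable {d : ℕ}

lemma neZero_of_hilbertDist_pos {x y : Fin d → ℝ} (h : 0 < hilbertDist x y) : NeZero d :=
  ⟨by rintro rfl; simp [hilbertDist] at h⟩

variable [NeZero d] {x y : Fin d → ℝ}

lemma hilbertDist_le_iff (hx : ∀ i, 0 < x i) (hy : ∀ i, 0 < y i) {c : ℝ} :
    hilbertDist x y ≤ c ↔ ∀ i j, x i * y j / (x j * y i) ≤ Real.exp c := by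
  have h00 : x 0 * y 0 / (x 0 * y 0) ≤ ⨆ i, ⨆ j, x i * y j / (x j * y i) :=
    (le_ciSup (Finite.bddAbove_range _) 0).trans
      (le_ciSup (f := fun i => ⨆ j, x i * y j / (x j * y i)) (Finite.bddAbove_range _) 0)
  rw [div_self (mul_pos (hx 0) (hy 0)).ne'] at h00
  rw [hilbertDist, Real.log_le_iff_le_exp (one_pos.trans_le h00),
    ciSup_le_iff (Finite.bddAbove_range _)]
  exact forall_congr' fun i => ciSup_le_iff (Finite.bddAbove_range _)

lemma log_le_hilbertDist (hx : ∀ i, 0 < x i) (hy : ∀ i, 0 < y i) (i j : Fin d) :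
    Real.log (x i * y j / (x j * y i)) ≤ hilbertDist x y := by
  have := hx i; have := hx j; have := hy i; have := hy j
  rw [Real.log_le_iff_le_exp (by positivity)]
  exact (hilbertDist_le_iff hx hy).1 le_rfl i j

lemma hilbertDist_nonneg (hx : ∀ i, 0 < x i) (hy : ∀ i, 0 < y i) : 0 ≤ hilbertDist x y := by
  simpa [div_self (mul_pos (hx 0) (hy 0)).ne'] using log_le_hilbertDist hx hy 0 0

end HilbertDist

section Birkhoff

variable {d : ℕ} {A : Matrix (Fin d) (Fin d) ℝ}

lemma mulVec_pos_of_nonneg_of_ne_zero (hA : ∀ a b, 0 < A a b) {v : Fin d → ℝ} (hv : 0 ≤ v)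
    (hv0 : v ≠ 0) (k : Fin d) : 0 < (A *ᵥ v) k := by
  obtain ⟨l, hl⟩ := Function.ne_iff.1 hv0
  exact Finset.sum_pos' (fun i _ => mul_nonneg (hA k i).le (hv i))
    ⟨l, mem_univ l, mul_pos (hA k l) ((hv l).lt_of_ne' hl)⟩

lemma mulVec_pos [NeZero d] (hA : ∀ a b, 0 < A a b) {v : Fin d → ℝ} (hv : ∀ i, 0 < v i) :
    ∀ k, 0 < (A *ᵥ v) k :=
  mulVec_pos_of_nonneg_of_ne_zero hA (fun i => (hv i).le) fun h => (hv 0).ne' (congrFun h 0)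

lemma mulVec_nonneg (hA : ∀ a b, 0 ≤ A a b) {v : Fin d → ℝ} (hv : 0 ≤ v) : 0 ≤ A *ᵥ v :=
  fun k => show 0 ≤ ∑ i, A k i * v i from sum_nonneg fun i _ => mul_nonneg (hA k i) (hv i)

lemma mulVec_mul_mulVec_le {K : ℝ} {k s : Fin d}
    (hK : ∀ i j, A k i * A s j ≤ K * (A k j * A s i)) {u v : Fin d → ℝ} (hu : 0 ≤ u) (hv : 0 ≤ v) :
    (A *ᵥ u) k * (A *ᵥ v) s ≤ K * ((A *ᵥ u) s * (A *ᵥ v) k) := by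
  simp only [mulVec, dotProduct]
  rw [sum_mul_sum, sum_mul_sum, mul_sum]
  refine sum_le_sum fun i _ => ?_
  rw [mul_sum]
  refine sum_le_sum fun j _ => ?_
  calc A k i * u i * (A s j * v j) = A k i * A s j * (u i * v j) := by ring
    _ ≤ K * (A k j * A s i) * (u i * v j) :=
        mul_le_mul_of_nonneg_right (hK i j) (mul_nonneg (hu i) (hv j))
    _ = K * (A s i * u i * (A k j * v j)) := by ring

lemma mul_apply_le_mul_mul_apply {Q B : Matrix (Fin d) (Fin d) ℝ} (hB : ∀ a b, 0 ≤ B a b)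
    {k s : Fin d} {c : ℝ} (h : ∀ l, Q k l ≤ c * Q s l) (i : Fin d) :
    (Q * B) k i ≤ c * (Q * B) s i := by
  simp only [mul_apply, mul_sum]
  exact sum_le_sum fun l _ => by nlinarith [mul_le_mul_of_nonneg_right (h l) (hB l i)]

lemma mul_mul_apply_le_mul_apply {Q B : Matrix (Fin d) (Fin d) ℝ} (hB : ∀ a b, 0 ≤ B a b)
    {k s : Fin d} {c : ℝ} (h : ∀ l, c * Q s l ≤ Q k l) (i : Fin d) :
    c * (Q * B) s i ≤ (Q * B) k i := by
  simp only [mul_apply, mul_sum]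
  exact sum_le_sum fun l _ => by nlinarith [mul_le_mul_of_nonneg_right (h l) (hB l i)]

lemma hilbertDist_mulVec_le [NeZero d] (hA : ∀ a b, 0 < A a b) {δ : ℝ}
    (hδ : ∀ k s, hilbertDist (A k) (A s) ≤ δ) {x y : Fin d → ℝ} (hx : ∀ i, 0 < x i)
    (hy : ∀ i, 0 < y i) :
    hilbertDist (A *ᵥ x) (A *ᵥ y) ≤ (Real.exp δ - 1) * hilbertDist x y := by
  set K := Real.exp δ
  have hK : 1 ≤ K := Real.one_le_exp ((hilbertDist_nonneg (hA 0) (hA 0)).trans (hδ 0 0))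
  have hcross : ∀ k s i j, A k i * A s j ≤ K * (A k j * A s i) := fun k s i j => by
    have := (hilbertDist_le_iff (hA k) (hA s)).1 (hδ k s) i j
    rwa [div_le_iff₀ (mul_pos (hA k j) (hA s i))] at this
  obtain ⟨i₀, hi₀⟩ := Finite.exists_max fun i => x i / y i
  obtain ⟨j₀, hj₀⟩ := Finite.exists_min fun i => x i / y i
  set β := x i₀ / y i₀
  set α := x j₀ / y j₀
  have hα : 0 < α := div_pos (hx j₀) (hy j₀)
  have hαβ : α ≤ β := (hj₀ i₀).trans (hi₀ i₀)
  have hβ : 0 < β := hα.trans_le hαβ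
  have hX := mulVec_pos hA hx
  have hY := mulVec_pos hA hy
  have hu : 0 ≤ x - α • y := fun i => by simpa [le_div_iff₀ (hy i)] using hj₀ i
  have hu' : 0 ≤ β • y - x := fun i => by simpa [div_le_iff₀ (hy i)] using hi₀ i
  have hup : ∀ k, (A *ᵥ x) k ≤ β * (A *ᵥ y) k := fun k => by
    simpa [mulVec_sub, mulVec_smul] using mulVec_nonneg (fun a b => (hA a b).le) hu' k
  have hshift : ∀ k s, ((A *ᵥ x) k - α * (A *ᵥ y) k) * (A *ᵥ y) s ≤
      K * (((A *ᵥ x) s - α * (A *ᵥ y) s) * (A *ᵥ y) k) := fun k s => by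
    simpa [mulVec_sub, mulVec_smul] using
      mulVec_mul_mulVec_le (hcross k s) hu fun i => (hy i).le
  have hgap : 0 ≤ (K - 1) * (1 - α / β) :=
    mul_nonneg (by linarith) (sub_nonneg.2 ((div_le_one hβ).2 hαβ))
  calc hilbertDist (A *ᵥ x) (A *ᵥ y) ≤ Real.log (1 + (K - 1) * (1 - α / β)) := by
        rw [hilbertDist_le_iff hX hY, Real.exp_log (by linarith)]
        intro k s
        have key : β * ((A *ᵥ x) k * (A *ᵥ y) s) ≤
            (β + (K - 1) * (β - α)) * ((A *ᵥ x) s * (A *ᵥ y) k) := by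
          nlinarith [mul_le_mul_of_nonneg_left (hshift k s) hβ.le, mul_le_mul_of_nonneg_left (hup s)
            (mul_nonneg (mul_nonneg (sub_nonneg.2 hK) hα.le) (hY k).le)]
        calc (A *ᵥ x) k * (A *ᵥ y) s / ((A *ᵥ x) s * (A *ᵥ y) k)
            ≤ (β + (K - 1) * (β - α)) / β := by
              rw [div_le_div_iff₀ (mul_pos (hX s) (hY k)) hβ]; linarith
          _ = 1 + (K - 1) * (1 - α / β) := by field_simp
    _ ≤ (K - 1) * (1 - α / β) := by
        linarith [Real.log_le_sub_one_of_pos (x := 1 + (K - 1) * (1 - α / β)) (by linarith)]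
    _ ≤ (K - 1) * Real.log (β / α) := by
        gcongr
        simpa using Real.one_sub_inv_le_log_of_pos (div_pos hβ hα)
    _ ≤ (K - 1) * hilbertDist x y := by
        gcongr
        rw [div_div_div_eq, mul_comm (y i₀)]
        exact log_le_hilbertDist hx hy i₀ j₀

lemma birkhoffCoeff_nonneg (hA : ∀ a b, 0 < A a b) : 0 ≤ birkhoffCoeff A := by
  refine Real.sSup_nonneg ?_
  rintro _ ⟨x, y, hx, hy, hD, rfl⟩
  have := neZero_of_hilbertDist_pos hD
  exact div_nonneg (hilbertDist_nonneg (mulVec_pos hA hx) (mulVec_pos hA hy)) hD.le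

lemma birkhoffCoeff_le (hA : ∀ a b, 0 < A a b) {δ : ℝ} (hδ₀ : 0 ≤ δ)
    (hδ : ∀ k s, hilbertDist (A k) (A s) ≤ δ) : birkhoffCoeff A ≤ Real.exp δ - 1 := by
  refine Real.sSup_le ?_ (sub_nonneg.2 (Real.one_le_exp hδ₀))
  rintro _ ⟨x, y, hx, hy, hD, rfl⟩
  have := neZero_of_hilbertDist_pos hD
  rw [div_le_iff₀ hD]
  exact hilbertDist_mulVec_le hA hδ hx hy

lemma hilbertDist_mulVec_le_birkhoffCoeff_mul [NeZero d] (hA : ∀ a b, 0 < A a b)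
    {x y : Fin d → ℝ} (hx : ∀ i, 0 < x i) (hy : ∀ i, 0 < y i) :
    hilbertDist (A *ᵥ x) (A *ᵥ y) ≤ birkhoffCoeff A * hilbertDist x y := by
  obtain ⟨δ, hδ⟩ := Finite.bddAbove_range fun q : Fin d × Fin d => hilbertDist (A q.1) (A q.2)
  have hδ' : ∀ k s, hilbertDist (A k) (A s) ≤ δ := fun k s => hδ ⟨(k, s), rfl⟩
  rcases (hilbertDist_nonneg hx hy).eq_or_lt with hD | hD
  · simpa [← hD] using hilbertDist_mulVec_le hA hδ' hx hy
  · rw [← div_le_iff₀ hD]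
    refine le_csSup ⟨Real.exp δ - 1, ?_⟩ ⟨x, y, hx, hy, hD, rfl⟩
    rintro _ ⟨x', y', hx', hy', hD', rfl⟩
    rw [div_le_iff₀ hD']
    exact hilbertDist_mulVec_le hA hδ' hx' hy'

lemma hilbertDist_mulVec_le_of_le [NeZero d] (hA : ∀ a b, 0 < A a b) {x y : Fin d → ℝ} {t : ℝ}
    (hy : 0 ≤ y) (hy0 : y ≠ 0) (hyx : y ≤ x) (hxt : x ≤ t • y) :
    hilbertDist (A *ᵥ x) (A *ᵥ y) ≤ birkhoffCoeff A * Real.log t := by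
  obtain ⟨l, hl⟩ := Function.ne_iff.1 hy0
  have hyl : 0 < y l := (hy l).lt_of_ne' hl
  have hxt' : ∀ i, x i ≤ t * y i := fun i => hxt i
  have ht : 1 ≤ t := le_of_mul_le_mul_right (by simpa using (hyx l).trans (hxt' l)) hyl
  have hx : 0 ≤ x := hy.trans hyx
  have hPx := mulVec_pos_of_nonneg_of_ne_zero hA hx fun h => hyl.not_ge (by simpa [h] using hyx l)
  have hPy := mulVec_pos_of_nonneg_of_ne_zero hA hy hy0
  rw [hilbertDist_le_iff hPx hPy]
  intro k s
  -- perturb `x, y` to the positive vectors `x + ε, y + ε`, still satisfying `y ≤ x ≤ t y`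
  set term : ℝ → ℝ := fun ε => (A *ᵥ fun l => x l + ε) k * (A *ᵥ fun l => y l + ε) s /
    ((A *ᵥ fun l => x l + ε) s * (A *ᵥ fun l => y l + ε) k)
  have hterm : ∀ ε > 0, term ε ≤ Real.exp (birkhoffCoeff A * Real.log t) := by
    intro ε hε
    have hxε : ∀ i, 0 < x i + ε := fun i => add_pos_of_nonneg_of_pos (hx i) hε
    have hyε : ∀ i, 0 < y i + ε := fun i => add_pos_of_nonneg_of_pos (hy i) hε
    refine (hilbertDist_le_iff (mulVec_pos hA hxε) (mulVec_pos hA hyε)).1 ?_ k s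
    refine (hilbertDist_mulVec_le_birkhoffCoeff_mul hA hxε hyε).trans ?_
    refine mul_le_mul_of_nonneg_left ((hilbertDist_le_iff hxε hyε).2 fun i j => ?_)
      (birkhoffCoeff_nonneg hA)
    rw [Real.exp_log (by linarith), div_le_iff₀ (mul_pos (hxε j) (hyε i))]
    have hi : x i + ε ≤ t * (y i + ε) := by nlinarith [hxt' i]
    have hj : y j + ε ≤ x j + ε := by linarith [hyx j]
    calc (x i + ε) * (y j + ε) ≤ t * (y i + ε) * (x j + ε) :=
          mul_le_mul hi hj (hyε j).le (mul_nonneg (by linarith) (hyε i).le)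
      _ = t * ((x j + ε) * (y i + ε)) := by ring
  have hcont : ContinuousAt term 0 := by
    refine ContinuousAt.div (by fun_prop) (by fun_prop) ?_
    simpa using (mul_pos (hPx s) (hPy k)).ne'
  have hlim := hcont.tendsto.mono_left (nhdsWithin_le_nhds (s := Set.Ioi 0))
  simp only [term, add_zero] at hlim
  exact le_of_tendsto hlim (eventually_nhdsWithin_of_forall hterm)

lemma two_mul_div_le_exp_birkhoffCoeff [NeZero d] (hA : ∀ a b, 0 < A a b) (k s i j : Fin d) :
    2 * (A k i * A s j + A k j * A s i) / (A k i * A s j + 3 * (A k j * A s i)) ≤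
      Real.exp (birkhoffCoeff A * Real.log 3) := by
  -- test vectors supported on `{i, j}`, with `(A *ᵥ x) k = 4` and `(A *ᵥ y) k = 2`
  set y : Fin d → ℝ := Pi.single i (A k i)⁻¹ + Pi.single j (A k j)⁻¹
  set x : Fin d → ℝ := Pi.single i (3 * (A k i)⁻¹) + Pi.single j (A k j)⁻¹
  have hki := hA k i
  have hkj := hA k j
  have hy : 0 ≤ y := by
    intro l; simp only [y, Pi.add_apply, Pi.single_apply]; split_ifs <;> positivity
  have hyx : y ≤ x := by
    intro l; simp only [x, y, Pi.add_apply, Pi.single_apply]; split_ifs <;> linarith [inv_pos.2 hki]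
  have hx3 : x ≤ (3 : ℝ) • y := by
    intro l; simp only [x, y, Pi.add_apply, Pi.smul_apply, Pi.single_apply, smul_eq_mul]
    split_ifs <;> linarith [inv_pos.2 hki, inv_pos.2 hkj]
  have hy0 : y ≠ 0 := fun h => by
    have : 0 < y i := by simp only [y, Pi.add_apply, Pi.single_apply]; split_ifs <;> positivity
    exact this.ne' (congrFun h i)
  have hPy : ∀ l, (A *ᵥ y) l = A l i / A k i + A l j / A k j := fun l => by
    simp [y, mulVec_add, mulVec_single, div_eq_mul_inv]
  have hPx : ∀ l, (A *ᵥ x) l = 3 * (A l i / A k i) + A l j / A k j := fun l => by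
    simp [x, mulVec_add, mulVec_single, div_eq_mul_inv]; ring
  have := (hilbertDist_le_iff (fun l => hPx l ▸ by have := hA l i; have := hA l j; positivity)
    (fun l => hPy l ▸ by have := hA l i; have := hA l j; positivity)).1
    (hilbertDist_mulVec_le_of_le hA hy hy0 hyx hx3) k s
  rw [hPx, hPx, hPy, hPy] at this
  convert this using 1
  field_simp
  ring

end Birkhoff

section Sequences

variable {d : ℕ} {P : ℕ → Matrix (Fin d) (Fin d) ℝ}

lemma tendsto_hilbertDist_of_tendsto_div [NeZero d] (hP : ∀ n a b, 0 < P n a b) {k s : Fin d}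
    {a : ℝ} (ha : 0 < a) (h : ∀ i, Tendsto (fun n => P n k i / P n s i) atTop (𝓝 a)) :
    Tendsto (fun n => hilbertDist (P n k) (P n s)) atTop (𝓝 0) := by
  refine tendsto_nhds_zero_of_nonneg_of_eventually_le
    (fun n => hilbertDist_nonneg (hP n k) (hP n s)) fun ε hε => ?_
  have hcross : ∀ i j, Tendsto (fun n => P n k i * P n s j / (P n k j * P n s i)) atTop (𝓝 1) :=
    fun i j => by
      have := (h i).div (h j) ha.ne'
      rw [div_self ha.ne'] at this
      refine this.congr fun n => ?_
      simp only [Pi.div_apply]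
      rw [div_div_div_eq, mul_comm (P n s i)]
  filter_upwards [eventually_all.2 fun i => eventually_all.2 fun j =>
    (hcross i j).eventually_le_const (Real.one_lt_exp_iff.2 hε)] with n hn
  exact (hilbertDist_le_iff (hP n k) (hP n s)).2 hn

lemma tendsto_birkhoffCoeff_of_tendsto_hilbertDist (hP : ∀ n a b, 0 < P n a b)
    (h : ∀ k s, Tendsto (fun n => hilbertDist (P n k) (P n s)) atTop (𝓝 0)) :
    Tendsto (fun n => birkhoffCoeff (P n)) atTop (𝓝 0) := by
  refine tendsto_nhds_zero_of_nonneg_of_eventually_le (fun n => birkhoffCoeff_nonneg (hP n))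
    fun ε hε => ?_
  have hδ : 0 < Real.log (1 + ε) := Real.log_pos (by linarith)
  filter_upwards [eventually_all.2 fun k => eventually_all.2 fun s =>
    (h k s).eventually_le_const hδ] with n hn
  simpa [Real.exp_log (by linarith : 0 < 1 + ε)] using birkhoffCoeff_le (hP n) hδ.le hn

lemma tendsto_hilbertDist_of_tendsto_birkhoffCoeff [NeZero d] (hP : ∀ n a b, 0 < P n a b)
    (h : Tendsto (fun n => birkhoffCoeff (P n)) atTop (𝓝 0)) (k s : Fin d) :
    Tendsto (fun n => hilbertDist (P n k) (P n s)) atTop (𝓝 0) := by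
  refine tendsto_nhds_zero_of_nonneg_of_eventually_le
    (fun n => hilbertDist_nonneg (hP n k) (hP n s)) fun ε hε => ?_
  set b := Real.exp ε
  have hb : 1 < b := Real.one_lt_exp_iff.2 hε
  have hlim : Tendsto (fun n => Real.exp (birkhoffCoeff (P n) * Real.log 3)) atTop (𝓝 1) := by
    simpa using (h.mul_const (Real.log 3)).rexp
  have hfb : 1 < 2 * (b + 1) / (b + 3) := by rw [one_lt_div (by linarith)]; linarith
  filter_upwards [hlim.eventually_lt_const hfb] with n hn
  refine (hilbertDist_le_iff (hP n k) (hP n s)).2 fun i j => ?_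
  have hN := mul_pos (hP n k i) (hP n s j)
  have hD := mul_pos (hP n k j) (hP n s i)
  have hbound := (two_mul_div_le_exp_birkhoffCoeff (hP n) k s i j).trans_lt hn
  rw [div_lt_div_iff₀ (by linarith) (by linarith)] at hbound
  rw [div_le_iff₀ hD]
  -- `r ↦ 2 (r + 1) / (r + 3)` is increasing
  nlinarith
lemma exists_tendsto_div_of_tendsto_hilbertDist [NeZero d] {B : ℕ → Matrix (Fin d) (Fin d) ℝ}
    (hP : ∀ n a b, 0 < P n a b) (hB : ∀ n a b, 0 ≤ B n a b) (hPB : ∀ n, P (n + 1) = P n * B n)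
    {k s : Fin d} (h : Tendsto (fun n => hilbertDist (P n k) (P n s)) atTop (𝓝 0)) :
    ∃ a, 0 < a ∧ ∀ i, Tendsto (fun n => P n k i / P n s i) atTop (𝓝 a) := by
  set r : ℕ → Fin d → ℝ := fun n i => P n k i / P n s i
  set α := fun n => ⨅ i, r n i
  set β := fun n => ⨆ i, r n i
  have hα_le : ∀ n i, α n ≤ r n i := fun n => ciInf_le (Finite.bddBelow_range _)
  have hle_β : ∀ n i, r n i ≤ β n := fun n => le_ciSup (Finite.bddAbove_range _)
  have hα : Monotone α := monotone_nat_of_le_succ fun n => le_ciInf fun i => by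
    rw [le_div_iff₀ (hP _ s i), hPB]
    exact mul_mul_apply_le_mul_apply (hB n)
      (fun l => (le_div_iff₀ (hP n s l)).1 (hα_le n l)) i
  have hβ : Antitone β := antitone_nat_of_succ_le fun n => ciSup_le fun i => by
    rw [div_le_iff₀ (hP _ s i), hPB]
    exact mul_apply_le_mul_mul_apply (hB n)
      (fun l => (div_le_iff₀ (hP n s l)).1 (hle_β n l)) i
  have hgap : ∀ b > 1, ∃ n, β n ≤ b * α n := fun b hb => by
    obtain ⟨n, hn⟩ := (h.eventually_le_const (Real.log_pos hb)).exists
    obtain ⟨i₀, hi₀⟩ := exists_eq_ciSup_of_finite (f := r n)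
    obtain ⟨j₀, hj₀⟩ := exists_eq_ciInf_of_finite (f := r n)
    have := (hilbertDist_le_iff (hP n k) (hP n s)).1 hn i₀ j₀
    rw [Real.exp_log (by linarith)] at this
    refine ⟨n, show ⨆ i, r n i ≤ b * ⨅ i, r n i from ?_⟩
    rw [← hi₀, ← hj₀, ← div_le_iff₀ (div_pos (hP n k j₀) (hP n s j₀))]
    simpa only [r, div_div_div_eq, mul_comm (P n s i₀)] using this
  have hα₀ : 0 < α 0 := by
    obtain ⟨j, hj⟩ := exists_eq_ciInf_of_finite (f := r 0)
    exact (show 0 < r 0 j from div_pos (hP 0 k j) (hP 0 s j)).trans_eq hj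
  obtain ⟨a, ha, hαa, hβa⟩ := exists_tendsto_of_monotone_of_antitone hα hβ
    (fun n => (hα_le n 0).trans (hle_β n 0)) hα₀ hgap
  exact ⟨a, ha, fun i => tendsto_of_tendsto_of_tendsto_of_le_of_le hαa hβa
    (fun n => hα_le n i) fun n => hle_β n i⟩

end Sequences

section ForwardProduct

variable {d : ℕ} {A : ℕ → Matrix (Fin d) (Fin d) ℝ} {m : ℕ}

lemma fwdProd_zero_add : fwdProd A m (0 + m) = A m := by
  simp [fwdProd]

lemma fwdProd_succ_add (n : ℕ) : fwdProd A m (n + 1 + m) = fwdProd A m (n + m) * A (n + m + 1) := by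
  rw [fwdProd, fwdProd, show n + 1 + m + 1 - m = n + 1 + 1 by omega,
    show n + m + 1 - m = n + 1 by omega, List.range'_concat, List.map_append, List.prod_append]
  simp [show m + (n + 1) = n + m + 1 by omega]

lemma fwdProd_add_pos (hA : ∀ k i j, 0 < A k i j) (n : ℕ) (a b : Fin d) :
    0 < fwdProd A m (n + m) a b := by
  induction n generalizing b with
  | zero => rw [fwdProd_zero_add]; exact hA m a b
  | succ n ih =>
    rw [fwdProd_succ_add, mul_apply]
    exact sum_pos (fun l _ => mul_pos (ih l) (hA _ l b)) ⟨a, mem_univ a⟩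

end ForwardProduct

/-- For strictly positive matrices, `τ(P_m^n) → 0` iff the products
`P_m^n` tend to row proportionality. -/
theorem stmt3 {d : ℕ} (A : ℕ → Matrix (Fin d) (Fin d) ℝ)
    (hA : ∀ k i j, 0 < A k i j) (m : ℕ) :
    Tendsto (fun n => birkhoffCoeff (fwdProd A m n)) atTop (nhds 0) ↔
    ∀ k s : Fin d, ∃ a : ℝ, 0 < a ∧ ∀ i : Fin d,
      Tendsto (fun n => fwdProd A m n k i / fwdProd A m n s i) atTop (nhds a) := by
  have hP := fwdProd_add_pos (m := m) hA
  rw [← tendsto_add_atTop_iff_nat m]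
  refine ⟨fun h k s => ?_, fun h => ?_⟩
  · have := NeZero.of_pos k.pos
    obtain ⟨a, ha, hlim⟩ := exists_tendsto_div_of_tendsto_hilbertDist hP
      (fun n a b => (hA _ a b).le) fwdProd_succ_add
      (tendsto_hilbertDist_of_tendsto_birkhoffCoeff hP h k s)
    exact ⟨a, ha, fun i => (tendsto_add_atTop_iff_nat m).1 (hlim i)⟩
  · refine tendsto_birkhoffCoeff_of_tendsto_hilbertDist hP fun k s => ?_
    have := NeZero.of_pos k.pos
    obtain ⟨a, ha, hlim⟩ := h k s
    exact tendsto_hilbertDist_of_tendsto_div hP ha fun i => (tendsto_add_atTop_iff_nat m).2 (hlim i)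
end

section
/- Let A = (a_{ij}) be a d×d real matrix with all entries strictly positive, and let Θ(A) denote the diameter, in the Hilbert projective metric D, of the image of the nonnegative orthant under A, i.e., Θ(A) = sup { D(Ax, Ay) : x, y ∈ ℝ^d nonnegative and nonzero }. Then Θ(A) = Θ(Aᵀ), and moreover Θ(A) = max_{i,j,k,l} log (a_{ik} a_{jl})/(a_{jk} a_{il}). -/
open Filter

/-- `Θ(A)`: the diameter, in the Hilbert projective metric, of the image of the
nonnegative orthant under a strictly positive matrix `A`. -/
noncomputable def thetaDiam {d : ℕ} (A : Matrix (Fin d) (Fin d) ℝ) : ℝ :=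
  sSup {t : ℝ | ∃ x y : Fin d → ℝ, (∀ i, 0 ≤ x i) ∧ x ≠ 0 ∧ (∀ i, 0 ≤ y i) ∧ y ≠ 0 ∧
    t = hilbertDist (A.mulVec x) (A.mulVec y)}

noncomputable def supM {d : ℕ} (A : Matrix (Fin d) (Fin d) ℝ) : ℝ :=
  ⨆ i : Fin d, ⨆ j : Fin d, ⨆ k : Fin d, ⨆ l : Fin d,
      Real.log ((A i k * A j l) / (A j k * A i l))

lemma le_sup4 {d : ℕ} (f : Fin d → Fin d → Fin d → Fin d → ℝ) (i j k l : Fin d) :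
    f i j k l ≤ ⨆ i, ⨆ j, ⨆ k, ⨆ l, f i j k l := by
  refine le_trans (le_ciSup (Finite.bddAbove_range _) l) ?_
  refine le_trans (le_ciSup (Finite.bddAbove_range fun k => ⨆ l, f i j k l) k) ?_
  refine le_trans (le_ciSup (Finite.bddAbove_range fun j => ⨆ k, ⨆ l, f i j k l) j) ?_
  exact le_ciSup (Finite.bddAbove_range fun i => ⨆ j, ⨆ k, ⨆ l, f i j k l) i

lemma sup4_le {d : ℕ} [Nonempty (Fin d)] {f : Fin d → Fin d → Fin d → Fin d → ℝ} {c : ℝ}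
    (h : ∀ i j k l, f i j k l ≤ c) : (⨆ i, ⨆ j, ⨆ k, ⨆ l, f i j k l) ≤ c :=
  ciSup_le fun i => ciSup_le fun j => ciSup_le fun k => ciSup_le fun l => h i j k l

lemma mulVec_pos_s4 {d : ℕ} {A : Matrix (Fin d) (Fin d) ℝ} (hA : ∀ i j, 0 < A i j)
    {x : Fin d → ℝ} (hx : ∀ i, 0 ≤ x i) (hx0 : x ≠ 0) (i : Fin d) :
    0 < A.mulVec x i := by
  have : ∃ k, x k ≠ 0 := by
    by_contra h
    push_neg at h
    exact hx0 (funext h)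
  obtain ⟨k, hk⟩ := this
  rw [Matrix.mulVec, dotProduct]
  refine Finset.sum_pos' (fun j _ => mul_nonneg (hA i j).le (hx j)) ⟨k, Finset.mem_univ k, ?_⟩
  exact mul_pos (hA i k) (lt_of_le_of_ne (hx k) (Ne.symm hk))

lemma entry_le {d : ℕ} {A : Matrix (Fin d) (Fin d) ℝ} (hA : ∀ i j, 0 < A i j)
    (i j k l : Fin d) : A i k * A j l ≤ Real.exp (supM A) * (A j k * A i l) := by
  have hden : 0 < A j k * A i l := mul_pos (hA j k) (hA i l)
  have hr : 0 < (A i k * A j l) / (A j k * A i l) :=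
    div_pos (mul_pos (hA i k) (hA j l)) hden
  have hlog : Real.log ((A i k * A j l) / (A j k * A i l)) ≤ supM A :=
    le_sup4 (fun i j k l => Real.log ((A i k * A j l) / (A j k * A i l))) i j k l
  have := (Real.log_le_iff_le_exp hr).mp hlog
  rwa [div_le_iff₀ hden] at this

/-- The key upper bound: any Hilbert distance of images is at most `supM A`. -/
lemma hilbert_le_supM {d : ℕ} {A : Matrix (Fin d) (Fin d) ℝ} (hA : ∀ i j, 0 < A i j)
    (hd : 0 < d) {x y : Fin d → ℝ} (hx : ∀ i, 0 ≤ x i) (hx0 : x ≠ 0)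
    (hy : ∀ i, 0 ≤ y i) (hy0 : y ≠ 0) :
    hilbertDist (A.mulVec x) (A.mulVec y) ≤ supM A := by
  haveI : Nonempty (Fin d) := ⟨⟨0, hd⟩⟩
  have hAx := mulVec_pos_s4 hA hx hx0
  have hAy := mulVec_pos_s4 hA hy hy0
  have key : ∀ i j : Fin d,
      (A.mulVec x i * A.mulVec y j) / (A.mulVec x j * A.mulVec y i) ≤ Real.exp (supM A) := by
    intro i j
    have hden : 0 < A.mulVec x j * A.mulVec y i := mul_pos (hAx j) (hAy i)
    rw [div_le_iff₀ hden]
    have expand : ∀ i' j' : Fin d, A.mulVec x i' * A.mulVec y j' =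
        ∑ k : Fin d, ∑ l : Fin d, (A i' k * A j' l) * (x k * y l) := by
      intro i' j'
      rw [Matrix.mulVec, Matrix.mulVec, dotProduct, dotProduct,
        Finset.sum_mul_sum]
      refine Finset.sum_congr rfl fun k _ => Finset.sum_congr rfl fun l _ => by ring
    rw [expand i j, expand j i, Finset.mul_sum]
    refine Finset.sum_le_sum fun k _ => ?_
    rw [Finset.mul_sum]
    refine Finset.sum_le_sum fun l _ => ?_
    calc A i k * A j l * (x k * y l)
        ≤ Real.exp (supM A) * (A j k * A i l) * (x k * y l) :=
          mul_le_mul_of_nonneg_right (entry_le hA i j k l) (mul_nonneg (hx k) (hy l))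
      _ = Real.exp (supM A) * (A j k * A i l * (x k * y l)) := by ring
  have hsup_pos : 0 < ⨆ i : Fin d, ⨆ j : Fin d,
      (A.mulVec x i * A.mulVec y j) / (A.mulVec x j * A.mulVec y i) := by
    obtain ⟨i⟩ := (inferInstance : Nonempty (Fin d))
    have h1 : (A.mulVec x i * A.mulVec y i) / (A.mulVec x i * A.mulVec y i)
        ≤ ⨆ j, (A.mulVec x i * A.mulVec y j) / (A.mulVec x j * A.mulVec y i) :=
      le_ciSup (Finite.bddAbove_range
        fun j => (A.mulVec x i * A.mulVec y j) / (A.mulVec x j * A.mulVec y i)) i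
    have h2 : (⨆ j, (A.mulVec x i * A.mulVec y j) / (A.mulVec x j * A.mulVec y i))
        ≤ ⨆ i, ⨆ j, (A.mulVec x i * A.mulVec y j) / (A.mulVec x j * A.mulVec y i) :=
      le_ciSup (Finite.bddAbove_range
        fun i => ⨆ j, (A.mulVec x i * A.mulVec y j) / (A.mulVec x j * A.mulVec y i)) i
    exact lt_of_lt_of_le (div_pos (mul_pos (hAx i) (hAy i)) (mul_pos (hAx i) (hAy i)))
      (le_trans h1 h2)
  rw [hilbertDist, Real.log_le_iff_le_exp hsup_pos]
  exact ciSup_le fun i => ciSup_le fun j => key i j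

lemma thetaDiam_eq_supM {d : ℕ} (A : Matrix (Fin d) (Fin d) ℝ) (hA : ∀ i j, 0 < A i j) :
    thetaDiam A = supM A := by
  rcases Nat.eq_zero_or_pos d with hd | hd
  · subst hd
    have h1 : thetaDiam A = 0 := by
      rw [thetaDiam]
      convert Real.sSup_empty using 2
      ext t
      simp only [Set.mem_setOf_eq, Set.mem_empty_iff_false, iff_false]
      rintro ⟨x, y, -, hx0, -⟩
      exact hx0 (Subsingleton.elim x 0)
    have h2 : supM A = 0 := Real.iSup_of_isEmpty _
    rw [h1, h2]
  · haveI : Nonempty (Fin d) := ⟨⟨0, hd⟩⟩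
    -- the maximizing tuple
    obtain ⟨⟨i0, j0, k0, l0⟩, hmax⟩ := Finite.exists_max
      (fun p : Fin d × Fin d × Fin d × Fin d =>
        Real.log ((A p.1 p.2.2.1 * A p.2.1 p.2.2.2) / (A p.2.1 p.2.2.1 * A p.1 p.2.2.2)))
    have hM : supM A = Real.log ((A i0 k0 * A j0 l0) / (A j0 k0 * A i0 l0)) := by
      unfold supM
      exact le_antisymm (sup4_le fun i j k l => hmax (i, j, k, l))
        (le_sup4 (fun i j k l => Real.log ((A i k * A j l) / (A j k * A i l))) i0 j0 k0 l0)
    -- membership: take basis vectors e_{k0}, e_{l0}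
    set x : Fin d → ℝ := Pi.single k0 1 with hxdef
    set y : Fin d → ℝ := Pi.single l0 1 with hydef
    have hx : ∀ i, 0 ≤ x i := fun i => by
      rcases eq_or_ne i k0 with h | h <;> simp [hxdef, h, Pi.single_apply]
    have hy : ∀ i, 0 ≤ y i := fun i => by
      rcases eq_or_ne i l0 with h | h <;> simp [hydef, h, Pi.single_apply]
    have hx0 : x ≠ 0 := by
      intro h
      have := congrFun h k0
      simp [hxdef] at this
    have hy0 : y ≠ 0 := by
      intro h
      have := congrFun h l0
      simp [hydef] at this
    have hAxcol : A.mulVec x = fun i => A i k0 := by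
      funext i
      simp [hxdef, Matrix.mulVec_single]
    have hAycol : A.mulVec y = fun i => A i l0 := by
      funext i
      simp [hydef, Matrix.mulVec_single]
    have hdist : hilbertDist (A.mulVec x) (A.mulVec y) = supM A := by
      refine le_antisymm (hilbert_le_supM hA hd hx hx0 hy hy0) ?_
      rw [hilbertDist, hAxcol, hAycol, hM]
      refine Real.log_le_log (div_pos (mul_pos (hA i0 k0) (hA j0 l0))
        (mul_pos (hA j0 k0) (hA i0 l0))) ?_
      refine le_trans ?_ (le_ciSup (Finite.bddAbove_range fun i =>
        ⨆ j, (A i k0 * A j l0) / (A j k0 * A i l0)) i0)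
      exact le_ciSup (Finite.bddAbove_range fun j =>
        (A i0 k0 * A j l0) / (A j k0 * A i0 l0)) j0
    refine le_antisymm ?_ ?_
    · refine csSup_le ⟨supM A, x, y, hx, hx0, hy, hy0, hdist.symm⟩ ?_
      rintro t ⟨x', y', hx', hx0', hy', hy0', rfl⟩
      exact hilbert_le_supM hA hd hx' hx0' hy' hy0'
    · refine le_csSup ⟨supM A, ?_⟩ ⟨x, y, hx, hx0, hy, hy0, hdist.symm⟩
      rintro t ⟨x', y', hx', hx0', hy', hy0', rfl⟩
      exact hilbert_le_supM hA hd hx' hx0' hy' hy0'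

lemma supM_transpose {d : ℕ} (A : Matrix (Fin d) (Fin d) ℝ) :
    supM A.transpose = supM A := by
  rcases Nat.eq_zero_or_pos d with hd | hd
  · subst hd
    rw [supM, supM, Real.iSup_of_isEmpty, Real.iSup_of_isEmpty]
  · haveI : Nonempty (Fin d) := ⟨⟨0, hd⟩⟩
    have key : ∀ (B : Matrix (Fin d) (Fin d) ℝ), supM B.transpose ≤ supM B := by
      intro B
      refine sup4_le fun i j k l => ?_
      have : Real.log ((B.transpose i k * B.transpose j l) / (B.transpose j k * B.transpose i l))
          = Real.log ((B k i * B l j) / (B l i * B k j)) := by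
        simp only [Matrix.transpose_apply]
        ring_nf
      rw [this]
      exact le_sup4 (fun i j k l => Real.log ((B i k * B j l) / (B j k * B i l))) k l i j
    refine le_antisymm (key A) ?_
    have := key A.transpose
    rwa [Matrix.transpose_transpose] at this

/-- For a strictly positive matrix `A`, one has `Θ(A) = Θ(Aᵀ)` and
`Θ(A) = max_{i,j,k,l} log (a_{ik} a_{jl})/(a_{jk} a_{il})`. -/
theorem stmt4 {d : ℕ} (A : Matrix (Fin d) (Fin d) ℝ) (hA : ∀ i j, 0 < A i j) :
    thetaDiam A = thetaDiam A.transpose ∧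
    thetaDiam A = ⨆ i : Fin d, ⨆ j : Fin d, ⨆ k : Fin d, ⨆ l : Fin d,
      Real.log ((A i k * A j l) / (A j k * A i l)) := by
  have hAt : ∀ i j, 0 < A.transpose i j := fun i j => hA j i
  have h1 := thetaDiam_eq_supM A hA
  have h2 := thetaDiam_eq_supM A.transpose hAt
  exact ⟨by rw [h1, h2, supM_transpose], h1⟩
end

section
/- Let {A_k}_{k≥1} be a sequence of d×d real matrices with all entries strictly positive, fix m ≥ 1, and set P_m^n = A_m A_{m+1} ⋯ A_n for n ≥ m. Then τ(P_m^n) → 0 as n → ∞ if and only if for every ε > 0 and every pair of nonnegative nonzero vectors x, y ∈ ℝ^d there exists N such that D(P_m^n x, P_m^n y) < ε for all n ≥ N. -/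
open Filter

/-!
Write `Δ(P)` for Birkhoff's projective diameter of a positive matrix `P`, the largest Hilbert
distance between two of its columns. Both conditions are equivalent to `Δ(P_m^n) → 0`.
Every image `Px` of a nonnegative nonzero vector lies in the cone spanned by the columns, so
`D(Px, Py) ≤ Δ(P)`; conversely the columns are the images of the basis vectors. A pairing argument
gives `D(Px, Py) ≤ (e^Δ - 1) D(x, y)`, hence `τ(P) ≤ e^Δ - 1`. For `τ → 0 ⇒ Δ → 0`, compare
each column with the image of a strictly positive vector close to a basis vector: this gives
`Δ ≤ 2 log (1 + η) + 2 τ (Δ + log ((d + η) / η))` for every `η > 0`, and once `τ < 1/4` the `Δ`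
on the right is absorbed by the left side.
-/

open Real Matrix Topology

namespace Birkhoff

variable {d : ℕ}

lemma mul_le_exp_hilbertDist_mul {x y : Fin d → ℝ} (hx : ∀ i, 0 < x i) (hy : ∀ i, 0 < y i)
    (i j : Fin d) : x i * y j ≤ exp (hilbertDist x y) * (x j * y i) := by
  have hle : x i * y j / (x j * y i) ≤ ⨆ i : Fin d, ⨆ j : Fin d, x i * y j / (x j * y i) :=
    le_ciSup_of_le (Finite.bddAbove_range _) i
      (le_ciSup (f := fun j => x i * y j / (x j * y i)) (Finite.bddAbove_range _) j)
  have hpos : 0 < x i * y j / (x j * y i) := by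
    have := hx i; have := hy i; have := hx j; have := hy j; positivity
  rw [hilbertDist, exp_log (hpos.trans_le hle), ← div_le_iff₀ (mul_pos (hx j) (hy i))]
  exact hle

lemma hilbertDist_le_log [NeZero d] {x y : Fin d → ℝ} (hx : ∀ i, 0 < x i)
    (hy : ∀ i, 0 < y i) {c : ℝ} (h : ∀ i j, x i * y j ≤ c * (x j * y i)) :
    hilbertDist x y ≤ log c := by
  have hsup : ⨆ i : Fin d, ⨆ j : Fin d, x i * y j / (x j * y i) ≤ c :=
    ciSup_le fun i => ciSup_le fun j => (div_le_iff₀ (mul_pos (hx j) (hy i))).2 (h i j)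
  have hpos : 0 < ⨆ i : Fin d, ⨆ j : Fin d, x i * y j / (x j * y i) := by
    refine lt_of_lt_of_le ?_ (le_ciSup_of_le (Finite.bddAbove_range _) 0
      (le_ciSup (Finite.bddAbove_range _) 0))
    have := hx 0; have := hy 0; positivity
  exact log_le_log hpos hsup

lemma hilbertDist_nonneg [NeZero d] {x y : Fin d → ℝ} (hx : ∀ i, 0 < x i) (hy : ∀ i, 0 < y i) :
    0 ≤ hilbertDist x y := by
  have h := mul_le_exp_hilbertDist_mul hx hy 0 0
  rw [le_mul_iff_one_le_left (mul_pos (hx 0) (hy 0)), one_le_exp_iff] at h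
  exact h

lemma hilbertDist_triangle [NeZero d] {x y z : Fin d → ℝ} (hx : ∀ i, 0 < x i)
    (hy : ∀ i, 0 < y i) (hz : ∀ i, 0 < z i) :
    hilbertDist x z ≤ hilbertDist x y + hilbertDist y z := by
  rw [← log_exp (hilbertDist x y + hilbertDist y z), exp_add]
  refine hilbertDist_le_log hx hz fun i j => ?_
  have hxy := mul_le_exp_hilbertDist_mul hx hy i j
  have hyz := mul_le_exp_hilbertDist_mul hy hz i j
  have hyy : 0 < y i * y j := mul_pos (hy i) (hy j)
  refine le_of_mul_le_mul_right ?_ hyy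
  calc x i * z j * (y i * y j) = (x i * y j) * (y i * z j) := by ring
    _ ≤ (exp (hilbertDist x y) * (x j * y i)) * (exp (hilbertDist y z) * (y j * z i)) :=
      mul_le_mul hxy hyz (mul_pos (hy i) (hz j)).le
        (mul_nonneg (exp_pos _).le (mul_pos (hx j) (hy i)).le)
    _ = exp (hilbertDist x y) * exp (hilbertDist y z) * (x j * z i) * (y i * y j) := by ring

lemma hilbertDist_le_of_bounds [NeZero d] {x y w : Fin d → ℝ} (hw : ∀ i, 0 < w i)
    {α β α' β' : ℝ} (hα : 0 < α) (hα' : 0 < α')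
    (hx : ∀ i, α * w i ≤ x i ∧ x i ≤ β * w i) (hy : ∀ i, α' * w i ≤ y i ∧ y i ≤ β' * w i) :
    hilbertDist x y ≤ log (β * β' / (α * α')) := by
  have hxpos : ∀ i, 0 < x i := fun i => (mul_pos hα (hw i)).trans_le (hx i).1
  have hypos : ∀ i, 0 < y i := fun i => (mul_pos hα' (hw i)).trans_le (hy i).1
  refine hilbertDist_le_log hxpos hypos fun i j => ?_
  calc x i * y j ≤ (β * w i) * (β' * w j) :=
        mul_le_mul (hx i).2 (hy j).2 (hypos j).le ((hxpos i).le.trans (hx i).2)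
    _ = β * β' / (α * α') * ((α * w j) * (α' * w i)) := by field_simp
    _ ≤ β * β' / (α * α') * (x j * y i) := by
        have hβ : 0 < β := pos_of_mul_pos_left ((mul_pos hα (hw 0)).trans_le
          ((hx 0).1.trans (hx 0).2)) (hw 0).le
        have hβ' : 0 < β' := pos_of_mul_pos_left ((mul_pos hα' (hw 0)).trans_le
          ((hy 0).1.trans (hy 0).2)) (hw 0).le
        exact mul_le_mul_of_nonneg_left
          (mul_le_mul (hx j).1 (hy i).1 (mul_pos hα' (hw i)).le (hxpos j).le) (by positivity)

lemma mulVec_pos {P : Matrix (Fin d) (Fin d) ℝ} (hP : ∀ i j, 0 < P i j) {x : Fin d → ℝ}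
    (hx : ∀ i, 0 ≤ x i) (hx0 : x ≠ 0) (i : Fin d) : 0 < (P *ᵥ x) i := by
  obtain ⟨k, hk⟩ := Function.ne_iff.1 hx0
  exact Finset.sum_pos' (fun j _ => mul_nonneg (hP i j).le (hx j))
    ⟨k, Finset.mem_univ k, mul_pos (hP i k) ((hx k).lt_of_ne' hk)⟩

lemma mulVec_pos_of_pos [NeZero d] {P : Matrix (Fin d) (Fin d) ℝ} (hP : ∀ i j, 0 < P i j)
    {x : Fin d → ℝ} (hx : ∀ i, 0 < x i) : ∀ i, 0 < (P *ᵥ x) i :=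
  mulVec_pos hP (fun i => (hx i).le) (Function.ne_iff.2 ⟨0, (hx 0).ne'⟩)

lemma mulVec_mul_mulVec (P : Matrix (Fin d) (Fin d) ℝ) (x y : Fin d → ℝ) (i j : Fin d) :
    (P *ᵥ x) i * (P *ᵥ y) j = ∑ k, ∑ l, P i k * P j l * (x k * y l) := by
  simp only [mulVec, dotProduct, Finset.sum_mul_sum]
  exact Finset.sum_congr rfl fun k _ => Finset.sum_congr rfl fun l _ => by ring

/-- Birkhoff's projective diameter `Δ(P)` of the image of the nonnegative cone, which is spanned
by the columns of `P`. -/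
noncomputable def projDiam (P : Matrix (Fin d) (Fin d) ℝ) : ℝ :=
  ⨆ k, ⨆ l, hilbertDist (P.col k) (P.col l)

lemma hilbertDist_col_le_projDiam (P : Matrix (Fin d) (Fin d) ℝ) (k l : Fin d) :
    hilbertDist (P.col k) (P.col l) ≤ projDiam P :=
  le_ciSup_of_le (Finite.bddAbove_range _) k
    (le_ciSup (f := fun l => hilbertDist (P.col k) (P.col l)) (Finite.bddAbove_range _) l)

lemma projDiam_le [NeZero d] {P : Matrix (Fin d) (Fin d) ℝ} {r : ℝ}
    (h : ∀ k l, hilbertDist (P.col k) (P.col l) ≤ r) : projDiam P ≤ r :=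
  ciSup_le fun k => ciSup_le fun l => h k l

lemma projDiam_nonneg [NeZero d] {P : Matrix (Fin d) (Fin d) ℝ} (hP : ∀ i j, 0 < P i j) :
    0 ≤ projDiam P :=
  (hilbertDist_nonneg (hP · 0) (hP · 0)).trans (hilbertDist_col_le_projDiam P 0 0)

lemma mul_le_exp_projDiam_mul {P : Matrix (Fin d) (Fin d) ℝ} (hP : ∀ i j, 0 < P i j)
    (i j k l : Fin d) : P i k * P j l ≤ exp (projDiam P) * (P j k * P i l) :=
  (mul_le_exp_hilbertDist_mul (hP · k) (hP · l) i j).trans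
    (mul_le_mul_of_nonneg_right (exp_le_exp.2 (hilbertDist_col_le_projDiam P k l))
      (mul_pos (hP j k) (hP i l)).le)

lemma hilbertDist_mulVec_le_projDiam [NeZero d] {P : Matrix (Fin d) (Fin d) ℝ}
    (hP : ∀ i j, 0 < P i j) {x y : Fin d → ℝ} (hx : ∀ i, 0 ≤ x i) (hx0 : x ≠ 0)
    (hy : ∀ i, 0 ≤ y i) (hy0 : y ≠ 0) :
    hilbertDist (P *ᵥ x) (P *ᵥ y) ≤ projDiam P := by
  rw [← log_exp (projDiam P)]
  refine hilbertDist_le_log (mulVec_pos hP hx hx0) (mulVec_pos hP hy hy0)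
    fun i j => ?_
  rw [mulVec_mul_mulVec, mulVec_mul_mulVec, Finset.mul_sum]
  refine Finset.sum_le_sum fun k _ => ?_
  rw [Finset.mul_sum]
  refine Finset.sum_le_sum fun l _ => ?_
  rw [← mul_assoc (exp _)]
  exact mul_le_mul_of_nonneg_right (mul_le_exp_projDiam_mul hP i j k l)
    (mul_nonneg (hx k) (hy l))

lemma sum_mul_mul_le_sum_swap {ι : Type*} [Fintype ι] {a u : ι → ι → ℝ} {E S : ℝ}
    (ha : ∀ k l, a k l ≤ E * a l k) (hu : ∀ k l, u k l ≤ S * u l k) :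
    (∑ k, ∑ l, a k l * u k l) * (S + E) ≤ (E * S + 1) * ∑ k, ∑ l, a l k * u k l := by
  have hpair : ∀ k l, (a k l * u k l + a l k * u l k) * (S + E)
      ≤ (E * S + 1) * (a l k * u k l + a k l * u l k) := fun k l => by
    -- the `(k, l)` and `(l, k)` terms are compared together
    nlinarith [mul_nonneg (sub_nonneg.2 (ha k l)) (sub_nonneg.2 (hu l k)),
      mul_nonneg (sub_nonneg.2 (ha l k)) (sub_nonneg.2 (hu k l))]
  have hsum := Finset.sum_le_sum fun k (_ : k ∈ Finset.univ) =>
    Finset.sum_le_sum fun l (_ : l ∈ Finset.univ) => hpair k l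
  simp only [add_mul, mul_add, Finset.sum_add_distrib, ← Finset.sum_mul, ← Finset.mul_sum]
    at hsum
  rw [Finset.sum_comm (f := fun k l => a l k * u l k),
    Finset.sum_comm (f := fun k l => a k l * u l k)] at hsum
  linarith

lemma hilbertDist_mulVec_le_exp_projDiam_sub_one_mul [NeZero d] {P : Matrix (Fin d) (Fin d) ℝ}
    (hP : ∀ i j, 0 < P i j) {x y : Fin d → ℝ} (hx : ∀ i, 0 < x i) (hy : ∀ i, 0 < y i) :
    hilbertDist (P *ᵥ x) (P *ᵥ y) ≤ (exp (projDiam P) - 1) * hilbertDist x y := by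
  set E := exp (projDiam P)
  set S := exp (hilbertDist x y)
  have hE : 1 ≤ E := one_le_exp_iff.2 (projDiam_nonneg hP)
  have hS : 1 ≤ S := one_le_exp_iff.2 (hilbertDist_nonneg hx hy)
  have key : ∀ i j, (P *ᵥ x) i * (P *ᵥ y) j
      ≤ (E * S + 1) / (S + E) * ((P *ᵥ x) j * (P *ᵥ y) i) := fun i j => by
    rw [div_mul_eq_mul_div, le_div_iff₀ (by positivity)]
    calc (P *ᵥ x) i * (P *ᵥ y) j * (S + E)
        = (∑ k, ∑ l, P i k * P j l * (x k * y l)) * (S + E) := by rw [mulVec_mul_mulVec]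
      _ ≤ (E * S + 1) * ∑ k, ∑ l, P i l * P j k * (x k * y l) :=
        sum_mul_mul_le_sum_swap (a := fun k l => P i k * P j l)
          (fun k l => (mul_le_exp_projDiam_mul hP i j k l).trans_eq (by ring))
          (mul_le_exp_hilbertDist_mul hx hy)
      _ = (E * S + 1) * ((P *ᵥ x) j * (P *ᵥ y) i) := by
        simp only [mulVec_mul_mulVec, mul_comm (P i _)]
  calc hilbertDist (P *ᵥ x) (P *ᵥ y) ≤ log ((E * S + 1) / (S + E)) :=
        hilbertDist_le_log (mulVec_pos_of_pos hP hx) (mulVec_pos_of_pos hP hy) key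
    _ ≤ (E * S + 1) / (S + E) - 1 := log_le_sub_one_of_pos (by positivity)
    _ = (E - 1) * ((S - 1) / (S + E)) := by field_simp; ring
    _ ≤ (E - 1) * ((S - 1) / S) := by
        gcongr
        linarith
    _ = (E - 1) * (1 - S⁻¹) := by field_simp
    _ ≤ (E - 1) * hilbertDist x y := by
        gcongr
        simpa [S] using one_sub_inv_le_log_of_pos (exp_pos (hilbertDist x y))

lemma birkhoffCoeff_nonneg [NeZero d] {P : Matrix (Fin d) (Fin d) ℝ} (hP : ∀ i j, 0 < P i j) :
    0 ≤ birkhoffCoeff P := by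
  refine Real.sSup_nonneg ?_
  rintro t ⟨x, y, hx, hy, hD, rfl⟩
  exact div_nonneg (hilbertDist_nonneg (mulVec_pos_of_pos hP hx) (mulVec_pos_of_pos hP hy)) hD.le

lemma birkhoffCoeff_le_exp_projDiam_sub_one [NeZero d] {P : Matrix (Fin d) (Fin d) ℝ}
    (hP : ∀ i j, 0 < P i j) :
    birkhoffCoeff P ≤ exp (projDiam P) - 1 := by
  refine Real.sSup_le ?_ (sub_nonneg.2 (one_le_exp_iff.2 (projDiam_nonneg hP)))
  rintro t ⟨x, y, hx, hy, hD, rfl⟩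
  exact (div_le_iff₀ hD).2 (hilbertDist_mulVec_le_exp_projDiam_sub_one_mul hP hx hy)

lemma hilbertDist_mulVec_le_birkhoffCoeff_mul [NeZero d] {P : Matrix (Fin d) (Fin d) ℝ}
    (hP : ∀ i j, 0 < P i j) {x y : Fin d → ℝ} (hx : ∀ i, 0 < x i) (hy : ∀ i, 0 < y i) :
    hilbertDist (P *ᵥ x) (P *ᵥ y) ≤ birkhoffCoeff P * hilbertDist x y := by
  rcases (hilbertDist_nonneg hx hy).eq_or_lt with hD | hD
  · simpa [← hD] using hilbertDist_mulVec_le_exp_projDiam_sub_one_mul hP hx hy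
  · have hbdd : BddAbove {t : ℝ | ∃ x y : Fin d → ℝ, (∀ i, 0 < x i) ∧ (∀ i, 0 < y i) ∧
        0 < hilbertDist x y ∧ t = hilbertDist (P *ᵥ x) (P *ᵥ y) / hilbertDist x y} := by
      refine ⟨exp (projDiam P) - 1, ?_⟩
      rintro t ⟨x, y, hx, hy, hD, rfl⟩
      exact (div_le_iff₀ hD).2 (hilbertDist_mulVec_le_exp_projDiam_sub_one_mul hP hx hy)
    exact (div_le_iff₀ hD).1 (le_csSup hbdd ⟨x, y, hx, hy, hD, rfl⟩)

lemma mulVec_inv_row_le {P : Matrix (Fin d) (Fin d) ℝ} (hP : ∀ i j, 0 < P i j) (r k a : Fin d) :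
    (P *ᵥ fun b => (P r b)⁻¹) a ≤ d * exp (projDiam P) * ((P r k)⁻¹ * P a k) := by
  calc (P *ᵥ fun b => (P r b)⁻¹) a = ∑ b, P a b * (P r b)⁻¹ := rfl
    _ ≤ ∑ _b : Fin d, exp (projDiam P) * ((P r k)⁻¹ * P a k) := by
        refine Finset.sum_le_sum fun b _ => ?_
        rw [← div_eq_mul_inv, div_le_iff₀ (hP r b)]
        have h := mul_le_exp_projDiam_mul hP a r b k
        rw [← le_div_iff₀ (hP r k)] at h
        exact h.trans_eq (by field_simp)
    _ = d * exp (projDiam P) * ((P r k)⁻¹ * P a k) := by simp [mul_assoc]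

lemma hilbertDist_col_le_birkhoffCoeff [NeZero d] {P : Matrix (Fin d) (Fin d) ℝ}
    (hP : ∀ i j, 0 < P i j) {δ : ℝ} (hδ : 0 < δ) (k l : Fin d) :
    hilbertDist (P.col k) (P.col l) ≤
      2 * log (1 + δ * d * exp (projDiam P)) + birkhoffCoeff P * (2 * log ((1 + δ) / δ)) := by
  set c := 1 + δ * d * exp (projDiam P)
  -- `v k` is a strictly positive perturbation of the basis vector `e k`, weighted by the inverse
  -- of row `0` so that `P *ᵥ v k` stays within the factor `c` of a multiple of column `k`.
  set w : Fin d → ℝ := fun b => (P 0 b)⁻¹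
  have hw : ∀ b, 0 < w b := fun b => inv_pos.2 (hP 0 b)
  set v : Fin d → Fin d → ℝ := fun k => δ • w + Pi.single k (w k)
  have hv : ∀ k b, δ * w b ≤ v k b ∧ v k b ≤ (1 + δ) * w b := fun k b => by
    by_cases hb : b = k
    · subst hb
      simp only [v, Pi.add_apply, Pi.smul_apply, smul_eq_mul, Pi.single_eq_same]
      constructor <;> nlinarith [hw b]
    · simp only [v, Pi.add_apply, Pi.smul_apply, smul_eq_mul, Pi.single_eq_of_ne hb]
      constructor <;> nlinarith [hw b]
  have hvpos : ∀ k b, 0 < v k b := fun k b => (mul_pos hδ (hw b)).trans_le (hv k b).1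
  have hPv : ∀ k a, w k * P a k ≤ (P *ᵥ v k) a ∧ (P *ᵥ v k) a ≤ c * w k * P a k := by
    intro k a
    have heq : (P *ᵥ v k) a = δ * (P *ᵥ w) a + w k * P a k := by
      simp [v, mulVec_add, mulVec_smul, mulVec_single, mul_comm]
    have hPw := mulVec_inv_row_le hP 0 k a
    have hPw0 := (mulVec_pos_of_pos hP hw a).le
    rw [heq]
    constructor
    · exact le_add_of_nonneg_left (mul_nonneg hδ.le hPw0)
    · calc δ * (P *ᵥ w) a + w k * P a k
          ≤ δ * (d * exp (projDiam P) * (w k * P a k)) + w k * P a k := by gcongr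
        _ = c * w k * P a k := by ring
  have hk : hilbertDist (P.col k) (P *ᵥ v k) ≤ log c :=
    (hilbertDist_le_of_bounds (β := 1) (hP · k) one_pos (hw k) (fun a => by simp)
      (hPv k)).trans_eq
      (by congr 1; field_simp [(hw k).ne'])
  have hl : hilbertDist (P *ᵥ v l) (P.col l) ≤ log c :=
    (hilbertDist_le_of_bounds (β' := 1) (hP · l) (hw l) one_pos (hPv l)
      (fun a => by simp)).trans_eq
      (by congr 1; field_simp [(hw l).ne'])
  have hkl : hilbertDist (P *ᵥ v k) (P *ᵥ v l) ≤ birkhoffCoeff P * (2 * log ((1 + δ) / δ)) := by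
    refine (hilbertDist_mulVec_le_birkhoffCoeff_mul hP (hvpos k) (hvpos l)).trans ?_
    refine mul_le_mul_of_nonneg_left ?_ (birkhoffCoeff_nonneg hP)
    refine (hilbertDist_le_of_bounds hw hδ hδ (hv k) (hv l)).trans_eq ?_
    rw [show (1 + δ) * (1 + δ) / (δ * δ) = ((1 + δ) / δ) ^ 2 by ring, log_pow]
    norm_num
  calc hilbertDist (P.col k) (P.col l)
      ≤ hilbertDist (P.col k) (P *ᵥ v k) + hilbertDist (P *ᵥ v k) (P.col l) :=
        hilbertDist_triangle (hP · k) (mulVec_pos_of_pos hP (hvpos k)) (hP · l)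
    _ ≤ hilbertDist (P.col k) (P *ᵥ v k) +
          (hilbertDist (P *ᵥ v k) (P *ᵥ v l) + hilbertDist (P *ᵥ v l) (P.col l)) :=
        add_le_add le_rfl (hilbertDist_triangle (mulVec_pos_of_pos hP (hvpos k))
          (mulVec_pos_of_pos hP (hvpos l)) (hP · l))
    _ ≤ _ := by linarith

lemma projDiam_le_of_birkhoffCoeff [NeZero d] {P : Matrix (Fin d) (Fin d) ℝ}
    (hP : ∀ i j, 0 < P i j) {η : ℝ} (hη : 0 < η) :
    projDiam P ≤ 2 * log (1 + η) + 2 * birkhoffCoeff P * (projDiam P + log ((d + η) / η)) := by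
  set E := exp (projDiam P)
  have hE : 1 ≤ E := one_le_exp_iff.2 (projDiam_nonneg hP)
  have hd : (0 : ℝ) < d := by exact_mod_cast Nat.pos_of_neZero d
  have hδ : 0 < η / (d * E) := by positivity
  have hlog : log ((1 + η / (d * E)) / (η / (d * E))) ≤ projDiam P + log ((d + η) / η) := by
    rw [← log_exp (projDiam P), ← log_mul (exp_pos _).ne' (by positivity)]
    refine log_le_log (by positivity) ?_
    rw [div_le_iff₀ hδ]
    field_simp
    nlinarith
  refine projDiam_le fun k l => (hilbertDist_col_le_birkhoffCoeff hP hδ k l).trans ?_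
  rw [show η / (d * E) * d * E = η by field_simp]
  nlinarith [mul_le_mul_of_nonneg_left hlog (birkhoffCoeff_nonneg hP)]

lemma list_prod_pos [NeZero d] {L : List (Matrix (Fin d) (Fin d) ℝ)} (hL : L ≠ [])
    (h : ∀ M ∈ L, ∀ i j, 0 < M i j) : ∀ i j, 0 < L.prod i j := by
  induction L with
  | nil => exact absurd rfl hL
  | cons M L ih =>
    rw [List.prod_cons]
    rcases eq_or_ne L [] with rfl | hL'
    · simpa using h M (by simp)
    · intro i j
      exact Finset.sum_pos (fun k _ => mul_pos (h M (by simp) i k)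
        (ih hL' (fun N hN => h N (by simp [hN])) k j)) Finset.univ_nonempty

lemma fwdProd_pos [NeZero d] {A : ℕ → Matrix (Fin d) (Fin d) ℝ}
    (hA : ∀ k i j, 0 < A k i j) {m n : ℕ} (hmn : m ≤ n) : ∀ i j, 0 < fwdProd A m n i j :=
  list_prod_pos (by simp; omega) (by simp only [List.mem_map]; rintro _ ⟨k, -, rfl⟩; exact hA k)

section Sequences

variable {ι : Type*} {l : Filter ι} {P : ι → Matrix (Fin d) (Fin d) ℝ}

theorem tendsto_birkhoffCoeff_zero_iff [NeZero d] (hP : ∀ᶠ n in l, ∀ i j, 0 < P n i j) :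
    Tendsto (fun n => birkhoffCoeff (P n)) l (𝓝 0) ↔
      Tendsto (fun n => projDiam (P n)) l (𝓝 0) := by
  refine ⟨fun hτ => tendsto_order.2 ⟨fun a ha => hP.mono fun n hn =>
    ha.trans_le (projDiam_nonneg hn), fun ε hε => ?_⟩, fun hΔ => ?_⟩
  · have hη : 0 < ε / 8 := by positivity
    have hK : Tendsto (fun n => birkhoffCoeff (P n) * log ((d + ε / 8) / (ε / 8))) l (𝓝 0) := by
      simpa using hτ.mul_const _
    filter_upwards [hP, hτ.eventually (gt_mem_nhds (by norm_num : (0 : ℝ) < 1 / 4)),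
      hK.eventually (gt_mem_nhds hη)] with n hn hτ₁ hτK
    have hlog : log (1 + ε / 8) ≤ ε / 8 := by
      linarith [log_le_sub_one_of_pos (by positivity : 0 < 1 + ε / 8)]
    linarith [projDiam_le_of_birkhoffCoeff hn hη,
      mul_le_mul_of_nonneg_right hτ₁.le (projDiam_nonneg hn)]
  · refine squeeze_zero' (hP.mono fun n hn => birkhoffCoeff_nonneg hn)
      (hP.mono fun n hn => birkhoffCoeff_le_exp_projDiam_sub_one hn) ?_
    simpa using hΔ.rexp.sub_const 1

theorem tendsto_projDiam_zero_iff [NeZero d] (hP : ∀ᶠ n in l, ∀ i j, 0 < P n i j) :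
    Tendsto (fun n => projDiam (P n)) l (𝓝 0) ↔
      ∀ ε : ℝ, 0 < ε → ∀ x y : Fin d → ℝ,
        (∀ i, 0 ≤ x i) → x ≠ 0 → (∀ i, 0 ≤ y i) → y ≠ 0 →
        ∀ᶠ n in l, hilbertDist (P n *ᵥ x) (P n *ᵥ y) < ε := by
  refine ⟨fun hΔ ε hε x y hx hx0 hy hy0 => ?_, fun h => tendsto_order.2 ⟨fun a ha =>
    hP.mono fun n hn => ha.trans_le (projDiam_nonneg hn), fun ε hε => ?_⟩⟩
  · filter_upwards [hP, hΔ.eventually (gt_mem_nhds hε)] with n hn hlt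
    exact (hilbertDist_mulVec_le_projDiam hn hx hx0 hy hy0).trans_lt hlt
  · have hsingle : ∀ k : Fin d, (∀ i, 0 ≤ (Pi.single k 1 : Fin d → ℝ) i) ∧
        (Pi.single k 1 : Fin d → ℝ) ≠ 0 :=
      fun k => ⟨fun i => by by_cases h : i = k <;> simp [h], Function.ne_iff.2 ⟨k, by simp⟩⟩
    have hcols : ∀ᶠ n in l, ∀ k k', hilbertDist ((P n).col k) ((P n).col k') < ε / 2 := by
      simp only [eventually_all, ← mulVec_single_one]
      exact fun k k' => h _ (half_pos hε) _ _ (hsingle k).1 (hsingle k).2 (hsingle k').1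
        (hsingle k').2
    filter_upwards [hcols] with n hn
    exact (projDiam_le fun k k' => (hn k k').le).trans_lt (half_lt_self hε)

end Sequences

end Birkhoff

open Birkhoff

/-- For strictly positive matrices, `τ(P_m^n) → 0` iff the images of
any two nonnegative nonzero vectors become arbitrarily close in projective metric. -/
theorem stmt5 {d : ℕ} (A : ℕ → Matrix (Fin d) (Fin d) ℝ)
    (hA : ∀ k i j, 0 < A k i j) (m : ℕ) :
    Tendsto (fun n => birkhoffCoeff (fwdProd A m n)) atTop (nhds 0) ↔
    ∀ ε : ℝ, 0 < ε → ∀ x y : Fin d → ℝ,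
      (∀ i, 0 ≤ x i) → x ≠ 0 → (∀ i, 0 ≤ y i) → y ≠ 0 →
      ∃ N : ℕ, ∀ n ≥ N,
        hilbertDist ((fwdProd A m n).mulVec x) ((fwdProd A m n).mulVec y) < ε := by
  rcases eq_or_ne d 0 with rfl | hd
  -- for `d = 0` every Hilbert distance is `log 0 = 0`, so `τ = 0`, and no vector is nonzero
  · have hτ : ∀ P : Matrix (Fin 0) (Fin 0) ℝ, birkhoffCoeff P = 0 := fun P => by
      simp [birkhoffCoeff, hilbertDist]
    simp [hτ]
  have : NeZero d := ⟨hd⟩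
  have hP : ∀ᶠ n in atTop, ∀ i j, 0 < fwdProd A m n i j :=
    eventually_atTop.2 ⟨m, fun n hn => fwdProd_pos hA hn⟩
  rw [tendsto_birkhoffCoeff_zero_iff hP, tendsto_projDiam_zero_iff hP]
  simp only [eventually_atTop]
end

section
/- Let {A_n}_{n≥1} be a sequence of d×d real matrices with all entries strictly positive, and for m ≥ 1 set C_m = ⋂_{n ≥ m} A_m A_{m+1} ⋯ A_n (ℝ₊^d), where ℝ₊^d is the cone of nonnegative vectors. Then each C_m contains a nonzero vector, and A_m C_{m+1} = C_m for every m. -/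
open Filter

/-- The nonnegative orthant `ℝ₊^d`. -/
def posCone (d : ℕ) : Set (Fin d → ℝ) := {x | ∀ i, 0 ≤ x i}

/-- The limiting cone `C_m = ⋂_{n ≥ m} A_m A_{m+1} ⋯ A_n (ℝ₊^d)`. -/
def limitCone {d : ℕ} (A : ℕ → Matrix (Fin d) (Fin d) ℝ) (m : ℕ) : Set (Fin d → ℝ) :=
  ⋂ n ∈ Set.Ici m, (fun x => (fwdProd A m n).mulVec x) '' posCone d

/-!
Every set involved is the image of the orthant under a matrix with positive entries, and such a
matrix `P` is proper on the orthant: `P j j * x j ≤ (P x) j` bounds `x` whenever `P x` is bounded.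
Hence the slices of the nested images `A_m ⋯ A_n (ℝ₊^d)` by a compact set are compact, and
Cantor's intersection theorem applies: slicing by the standard simplex gives a nonzero vector of
`C_m`, and slicing the images `A_{m+1} ⋯ A_n (ℝ₊^d)` by the compact fibre
`{x ≥ 0 | A_m x = y}` over `y ∈ C_m` gives a preimage of `y` in `C_{m+1}`.
-/

variable {d : ℕ}

namespace Matrix

variable {P Q : Matrix (Fin d) (Fin d) ℝ}

theorem mulVec_mem_posCone (hP : ∀ i j, 0 ≤ P i j) {x : Fin d → ℝ} (hx : x ∈ posCone d) :
    P *ᵥ x ∈ posCone d := fun i =>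
  show 0 ≤ ∑ j, P i j * x j from Finset.sum_nonneg fun j _ => mul_nonneg (hP i j) (hx j)

theorem image_mul_posCone_subset (hQ : ∀ i j, 0 ≤ Q i j) :
    (P * Q).mulVec '' posCone d ⊆ P.mulVec '' posCone d := by
  rintro _ ⟨x, hx, rfl⟩
  exact ⟨Q *ᵥ x, mulVec_mem_posCone hQ hx, mulVec_mulVec x P Q⟩

theorem isCompact_posCone_inter_preimage (hP : ∀ i j, 0 ≤ P i j) (hPd : ∀ i, 0 < P i i)
    {T : Set (Fin d → ℝ)} (hT : IsCompact T) : IsCompact (posCone d ∩ P.mulVec ⁻¹' T) := by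
  have hclosed : IsClosed (posCone d ∩ P.mulVec ⁻¹' T) :=
    (isClosed_Ici (a := (0 : Fin d → ℝ))).inter
      (hT.isClosed.preimage (continuous_const.matrix_mulVec continuous_id))
  obtain ⟨C, hC⟩ := hT.isBounded.exists_norm_le
  refine (isCompact_Icc (a := 0) (b := fun j => C / P j j)).of_isClosed_subset hclosed ?_
  rintro x ⟨hx, hPx⟩
  refine ⟨hx, fun j => (le_div_iff₀' (hPd j)).2 ?_⟩
  calc P j j * x j ≤ (P *ᵥ x) j :=
        Finset.single_le_sum (f := fun k => P j k * x k)
          (fun k _ => mul_nonneg (hP j k) (hx k)) (Finset.mem_univ j)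
    _ ≤ ‖P *ᵥ x‖ := (le_abs_self _).trans (norm_le_pi_norm (P *ᵥ x) j)
    _ ≤ C := hC _ hPx

theorem nonempty_image_posCone_inter_stdSimplex (hd : 0 < d) (hP : ∀ i j, 0 < P i j) :
    (P.mulVec '' posCone d ∩ stdSimplex ℝ (Fin d)).Nonempty := by
  have : Nonempty (Fin d) := Fin.pos_iff_nonempty.mp hd
  set s := ∑ i, ∑ j, P i j
  have hs : 0 < s := Finset.sum_pos
    (fun i _ => Finset.sum_pos (fun j _ => hP i j) Finset.univ_nonempty) Finset.univ_nonempty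
  have hx : (fun _ => s⁻¹) ∈ posCone d := fun _ => inv_nonneg.2 hs.le
  refine ⟨P *ᵥ fun _ => s⁻¹, ⟨_, hx, rfl⟩,
    mulVec_mem_posCone (fun i j => (hP i j).le) hx, ?_⟩
  simp only [mulVec, dotProduct, ← Finset.sum_mul]
  exact mul_inv_cancel₀ hs.ne'

end Matrix

open Matrix

theorem exists_mem_inter_iInter_image_posCone {P : ℕ → Matrix (Fin d) (Fin d) ℝ}
    (hP : ∀ n i j, 0 ≤ P n i j) (hPd : ∀ n i, 0 < P n i i)
    (hanti : Antitone fun n => (P n).mulVec '' posCone d) {T : Set (Fin d → ℝ)}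
    (hT : IsCompact T) (hne : ∀ n, ((P n).mulVec '' posCone d ∩ T).Nonempty) :
    ∃ x ∈ T, ∀ n, x ∈ (P n).mulVec '' posCone d := by
  have hcompact n : IsCompact ((P n).mulVec '' posCone d ∩ T) := by
    rw [← Set.image_inter_preimage]
    exact (isCompact_posCone_inter_preimage (hP n) (hPd n) hT).image
      (continuous_const.matrix_mulVec continuous_id)
  obtain ⟨x, hx⟩ := IsCompact.nonempty_iInter_of_sequence_nonempty_isCompact_isClosed _
    (fun n => Set.inter_subset_inter_left T (hanti n.le_succ)) hne (hcompact 0)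
    (fun n => (hcompact n).isClosed)
  rw [Set.mem_iInter] at hx
  exact ⟨x, (hx 0).2, fun n => (hx n).1⟩

section fwdProd

variable (A : ℕ → Matrix (Fin d) (Fin d) ℝ)

theorem fwdProd_self (m : ℕ) : fwdProd A m m = A m := by
  simp [fwdProd, List.range'_one]

theorem fwdProd_succ {m n : ℕ} (h : m ≤ n) :
    fwdProd A m (n + 1) = fwdProd A m n * A (n + 1) := by
  rw [fwdProd, fwdProd, show n + 1 + 1 - m = n + 1 - m + 1 by omega, List.range'_1_concat,
    show m + (n + 1 - m) = n + 1 by omega, List.map_append, List.prod_append]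
  simp

theorem fwdProd_eq_mul_fwdProd {m n : ℕ} (h : m < n) :
    fwdProd A m n = A m * fwdProd A (m + 1) n := by
  rw [fwdProd, fwdProd, show n + 1 - m = n + 1 - (m + 1) + 1 by omega, List.range'_succ,
    List.map_cons, List.prod_cons]

theorem fwdProd_pos (hd : 0 < d) (hA : ∀ k i j, 0 < A k i j) {m n : ℕ} (h : m ≤ n)
    (i j : Fin d) : 0 < fwdProd A m n i j := by
  have : Nonempty (Fin d) := Fin.pos_iff_nonempty.mp hd
  induction n, h using Nat.le_induction generalizing i j with
  | base => exact fwdProd_self A m ▸ hA m i j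
  | succ n hmn ih =>
    rw [fwdProd_succ A hmn, mul_apply]
    exact Finset.sum_pos (fun k _ => mul_pos (ih i k) (hA _ k j)) Finset.univ_nonempty

theorem antitone_image_fwdProd_posCone (hA : ∀ k i j, 0 ≤ A k i j) (m : ℕ) :
    Antitone fun k => (fwdProd A m (m + k)).mulVec '' posCone d :=
  antitone_nat_of_succ_le fun k => by
    simpa only [← add_assoc, fwdProd_succ A (Nat.le_add_right m k)] using
      image_mul_posCone_subset (hA _)

theorem mem_limitCone_iff {m : ℕ} {y : Fin d → ℝ} :
    y ∈ limitCone A m ↔ ∀ k, y ∈ (fwdProd A m (m + k)).mulVec '' posCone d := by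
  simp only [limitCone, Set.mem_iInter, Set.mem_Ici]
  refine ⟨fun h k => h _ (Nat.le_add_right m k), fun h n hn => ?_⟩
  obtain ⟨k, rfl⟩ := Nat.exists_eq_add_of_le hn
  exact h k

theorem limitCone_subset_posCone (hA : ∀ k i j, 0 ≤ A k i j) (m : ℕ) :
    limitCone A m ⊆ posCone d := by
  intro y hy
  obtain ⟨x, hx, rfl⟩ := (mem_limitCone_iff A).1 hy 0
  exact mulVec_mem_posCone (fun i j => Nat.add_zero m ▸ fwdProd_self A m ▸ hA m i j) hx

theorem image_mulVec_limitCone_succ_subset (hA : ∀ k i j, 0 ≤ A k i j) (m : ℕ) :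
    (A m).mulVec '' limitCone A (m + 1) ⊆ limitCone A m := by
  rintro _ ⟨x, hx, rfl⟩
  refine (mem_limitCone_iff A).2 fun k => ?_
  cases k with
  | zero => exact ⟨x, limitCone_subset_posCone A hA _ hx, by rw [Nat.add_zero, fwdProd_self]⟩
  | succ k =>
    obtain ⟨z, hz, rfl⟩ := (mem_limitCone_iff A).1 hx k
    refine ⟨z, hz, ?_⟩
    rw [fwdProd_eq_mul_fwdProd A (by omega), ← mulVec_mulVec, ← add_assoc, Nat.add_right_comm]

theorem limitCone_subset_image_mulVec_limitCone_succ (hd : 0 < d) (hA : ∀ k i j, 0 < A k i j)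
    (m : ℕ) : limitCone A m ⊆ (A m).mulVec '' limitCone A (m + 1) := by
  intro y hy
  have hfibre : IsCompact (posCone d ∩ (A m).mulVec ⁻¹' {y}) :=
    isCompact_posCone_inter_preimage (fun i j => (hA m i j).le) (fun i => hA m i i)
      isCompact_singleton
  have hne k : ((fwdProd A (m + 1) (m + 1 + k)).mulVec '' posCone d ∩
      (posCone d ∩ (A m).mulVec ⁻¹' {y})).Nonempty := by
    obtain ⟨z, hz, hzy⟩ := (mem_limitCone_iff A).1 hy (k + 1)
    refine ⟨_, ⟨z, hz, rfl⟩,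
      mulVec_mem_posCone (fun i j => (fwdProd_pos A hd hA le_self_add i j).le) hz, ?_⟩
    rw [Set.mem_preimage, mulVec_mulVec, ← fwdProd_eq_mul_fwdProd A (by omega : m < m + 1 + k),
      add_assoc, add_comm 1 k]
    exact hzy
  obtain ⟨x, ⟨-, hxy⟩, hx⟩ := exists_mem_inter_iInter_image_posCone
    (fun k i j => (fwdProd_pos A hd hA le_self_add i j).le)
    (fun k i => fwdProd_pos A hd hA le_self_add i i)
    (antitone_image_fwdProd_posCone A (fun k i j => (hA k i j).le) (m + 1)) hfibre hne
  exact ⟨x, (mem_limitCone_iff A).2 hx, hxy⟩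

end fwdProd

/-- For strictly positive matrices, each limiting cone `C_m`
contains a nonzero vector, and `A_m C_{m+1} = C_m` for every `m`. -/
theorem stmt9 {d : ℕ} (hd : 0 < d) (A : ℕ → Matrix (Fin d) (Fin d) ℝ)
    (hA : ∀ k i j, 0 < A k i j) :
    ∀ m, (∃ v ∈ limitCone A m, v ≠ 0) ∧
      (fun x => (A m).mulVec x) '' limitCone A (m + 1) = limitCone A m := by
  intro m
  have hpos {k} i j : 0 < fwdProd A m (m + k) i j := fwdProd_pos A hd hA le_self_add i j
  obtain ⟨v, hv, hvC⟩ := exists_mem_inter_iInter_image_posCone (fun k i j => (hpos i j).le)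
    (fun k i => hpos i i) (antitone_image_fwdProd_posCone A (fun k i j => (hA k i j).le) m)
    (isCompact_stdSimplex ℝ (Fin d)) (fun k => nonempty_image_posCone_inter_stdSimplex hd hpos)
  refine ⟨⟨v, (mem_limitCone_iff A).2 hvC, ?_⟩, ?_⟩
  · rintro rfl
    simpa using hv.2
  · exact (image_mulVec_limitCone_succ_subset A (fun k i j => (hA k i j).le) m).antisymm
      (limitCone_subset_image_mulVec_limitCone_succ A hd hA m)
end

section
/- Define a sequence (c_n)_{n≥1} of complex numbers by c_1 = 1, c_2 = 2, and c_n = 2c_{n-1} + (n-2)c_{n-2} for n ≥ 3. Then c_n = (-i/√2)^{n-1} · H_{n-1}(i√2) for all n ≥ 1, where H_k denotes the physicists' Hermite polynomial (H_0 = 1, H_1(z) = 2z, H_{k+1}(z) = 2z·H_k(z) − 2k·H_{k-1}(z)); equivalently, c_n = (−i)^{n-1} · He_{n-1}(2i), where He_k denotes the probabilists' Hermite polynomial (He_0 = 1, He_1(z) = z, He_{k+1}(z) = z·He_k(z) − k·He_{k-1}(z)). -/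
open Polynomial

/-- The physicists' Hermite polynomials, as functions on `ℂ`:
`H_0 = 1`, `H_1(z) = 2z`, `H_{k+2}(z) = 2z·H_{k+1}(z) − 2(k+1)·H_k(z)`. -/
noncomputable def physHermite : ℕ → ℂ → ℂ
  | 0, _ => 1
  | 1, z => 2 * z
  | (k + 2), z => 2 * z * physHermite (k + 1) z - 2 * ((k : ℂ) + 1) * physHermite k z

/-
Both right-hand sides, shifted to `k = n - 1`, satisfy `a (k+2) = 2 a (k+1) + (k+1) a k` with
`a 0 = 1`, `a 1 = 2`, which is the recurrence of `k ↦ c (k+1)`. For `r^k H_k(z)` this comes from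
the three-term recurrence of `H` once `r z = 1` and `2 r² = -1`, which holds for `r = -i/√2`,
`z = i√2`; for `s^k He_k(z)` it needs `s z = 2` and `s² = -1`, which holds for `s = -i`, `z = 2i`.
-/

theorem eq_of_two_step_recurrence {α : Type*} {a b : ℕ → α} (F : ℕ → α → α → α)
    (ha : ∀ k, a (k + 2) = F k (a (k + 1)) (a k)) (hb : ∀ k, b (k + 2) = F k (b (k + 1)) (b k))
    (h0 : a 0 = b 0) (h1 : a 1 = b 1) : a = b := by
  funext n
  induction n using Nat.twoStepInduction with
  | zero => exact h0
  | one => exact h1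
  | more k ih₀ ih₁ => rw [ha, hb, ih₀, ih₁]

namespace Polynomial

theorem derivative_hermite_succ (n : ℕ) :
    derivative (hermite (n + 1)) = (n + 1 : ℤ[X]) * hermite n := by
  induction n with
  | zero => simp
  | succ n ih =>
    rw [hermite_succ (n + 1), derivative_sub, derivative_mul, derivative_X, ih, derivative_mul,
      derivative_add, derivative_natCast, derivative_one, hermite_succ n]
    push_cast
    ring

theorem hermite_succ_succ (n : ℕ) :
    hermite (n + 2) = X * hermite (n + 1) - (n + 1 : ℤ[X]) * hermite n := by
  rw [hermite_succ (n + 1), derivative_hermite_succ]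

theorem pow_mul_aeval_hermite_succ_succ {R : Type*} [CommRing R] {s z : R} (hsz : s * z = 2)
    (hs : s ^ 2 = -1) (k : ℕ) :
    s ^ (k + 2) * aeval z (hermite (k + 2))
      = 2 * (s ^ (k + 1) * aeval z (hermite (k + 1))) + (k + 1) * (s ^ k * aeval z (hermite k)) := by
  rw [hermite_succ_succ]
  simp only [map_sub, map_mul, aeval_X, map_add, map_natCast, map_one]
  linear_combination (s ^ (k + 1) * aeval z (hermite (k + 1))) * hsz
    - ((k + 1) * s ^ k * aeval z (hermite k)) * hs

end Polynomial

theorem pow_mul_physHermite_succ_succ {r z : ℂ} (hrz : r * z = 1) (hr : 2 * r ^ 2 = -1) (k : ℕ) :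
    r ^ (k + 2) * physHermite (k + 2) z
      = 2 * (r ^ (k + 1) * physHermite (k + 1) z) + (k + 1) * (r ^ k * physHermite k z) := by
  rw [physHermite]
  linear_combination (2 * r ^ (k + 1) * physHermite (k + 1) z) * hrz
    - ((k + 1) * r ^ k * physHermite k z) * hr

theorem neg_I_div_sqrt_two_mul_I_mul_sqrt_two :
    -Complex.I / (Real.sqrt 2 : ℂ) * (Complex.I * (Real.sqrt 2 : ℂ)) = 1 := by
  have : (Real.sqrt 2 : ℂ) ≠ 0 := by exact_mod_cast (Real.sqrt_pos.2 two_pos).ne'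
  field_simp
  simp

theorem two_mul_neg_I_div_sqrt_two_sq : 2 * (-Complex.I / (Real.sqrt 2 : ℂ)) ^ 2 = -1 := by
  have : (Real.sqrt 2 : ℂ) ^ 2 = 2 := by exact_mod_cast Real.sq_sqrt zero_le_two
  rw [div_pow, this, neg_pow_two, Complex.I_sq]
  ring

/-- The sequence `c_1 = 1`, `c_2 = 2`,
`c_n = 2c_{n-1} + (n-2)c_{n-2}` satisfies
`c_n = (-i/√2)^{n-1} H_{n-1}(i√2)` (physicists' Hermite polynomials), equivalently
`c_n = (-i)^{n-1} He_{n-1}(2i)` (probabilists' Hermite polynomials,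
`Polynomial.hermite` in Mathlib). -/
theorem stmt14 (c : ℕ → ℂ) (h1 : c 1 = 1) (h2 : c 2 = 2)
    (hrec : ∀ n, 3 ≤ n → c n = 2 * c (n - 1) + ((n : ℂ) - 2) * c (n - 2)) :
    ∀ n, 1 ≤ n →
      c n = (-Complex.I / (Real.sqrt 2 : ℂ)) ^ (n - 1) *
              physHermite (n - 1) (Complex.I * (Real.sqrt 2 : ℂ)) ∧
      c n = (-Complex.I) ^ (n - 1) *
              Polynomial.aeval (2 * Complex.I) (Polynomial.hermite (n - 1)) := by
  have hc : ∀ k : ℕ, c (k + 3) = 2 * c (k + 2) + (k + 1) * c (k + 1) := fun k => by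
    rw [hrec (k + 3) (by omega)]
    push_cast
    ring_nf
  set r : ℂ := -Complex.I / (Real.sqrt 2 : ℂ)
  set z : ℂ := Complex.I * (Real.sqrt 2 : ℂ)
  have hrz : r * z = 1 := neg_I_div_sqrt_two_mul_I_mul_sqrt_two
  have hsw : -Complex.I * (2 * Complex.I) = 2 := by
    linear_combination -2 * Complex.I_sq
  have hphys := eq_of_two_step_recurrence (fun k x y => 2 * x + ((k : ℂ) + 1) * y)
    (a := fun k => c (k + 1)) (b := fun k => r ^ k * physHermite k z) hc
    (pow_mul_physHermite_succ_succ hrz two_mul_neg_I_div_sqrt_two_sq)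
    (by simp [h1, physHermite])
    (show c 2 = r ^ 1 * (2 * z) by rw [h2]; linear_combination -2 * hrz)
  have hprob := eq_of_two_step_recurrence (fun k x y => 2 * x + ((k : ℂ) + 1) * y)
    (a := fun k => c (k + 1)) (b := fun k => (-Complex.I) ^ k * aeval (2 * Complex.I) (hermite k))
    hc (pow_mul_aeval_hermite_succ_succ hsw (by simp))
    (by simp [h1]) (by
      show c 2 = (-Complex.I) ^ 1 * aeval (2 * Complex.I) (hermite 1)
      rw [h2, hermite_one, aeval_X]
      linear_combination -hsw)
  intro n hn
  obtain ⟨k, rfl⟩ : ∃ k, n = k + 1 := ⟨n - 1, by omega⟩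
  exact ⟨congrFun hphys k, congrFun hprob k⟩
end

section
/- Define real sequences (c_n)_{n≥1} and (d_n)_{n≥1} by c_1 = d_1 = 1, c_{n+1} = c_n + d_n, and d_{n+1} = (n+1)·c_n + d_n for n ≥ 1. Then c_n/d_n → 0 as n → ∞. -/
open Filter

/-- For the sequences `c_1 = d_1 = 1`, `c_{n+1} = c_n + d_n`,
`d_{n+1} = (n+1)c_n + d_n`, one has `c_n/d_n → 0`. -/
theorem stmt15 (c d : ℕ → ℝ) (hc1 : c 1 = 1) (hd1 : d 1 = 1)
    (hc : ∀ n, 1 ≤ n → c (n + 1) = c n + d n)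
    (hd : ∀ n, 1 ≤ n → d (n + 1) = (n + 1) * c n + d n) :
    Tendsto (fun n => c n / d n) atTop (nhds 0) := by
  have key : ∀ n, 1 ≤ n → 0 < c n ∧ 0 < d n ∧
      c n * Real.sqrt n ≤ 2 * d n ∧ d n ≤ 2 * Real.sqrt n * c n := by
    intro n hn
    induction n, hn using Nat.le_induction with
    | base =>
      rw [hc1, hd1]
      norm_num
    | succ n hn ih =>
      obtain ⟨hcp, hdp, hub, hlb⟩ := ih
      have hs1 : (1:ℝ) ≤ Real.sqrt n := by
        rw [show (1:ℝ) = Real.sqrt 1 by simp]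
        exact Real.sqrt_le_sqrt (by exact_mod_cast hn)
      have hst : Real.sqrt n ≤ Real.sqrt (n + 1 : ℕ) :=
        Real.sqrt_le_sqrt (by push_cast; linarith)
      set s := Real.sqrt n with hsdef
      set t := Real.sqrt (n + 1 : ℕ) with htdef
      have hs2 : s ^ 2 = n := Real.sq_sqrt (by positivity)
      have ht2 : t ^ 2 = (n : ℝ) + 1 := by
        rw [htdef, Real.sq_sqrt (by positivity)]; push_cast; ring
      have hcn1 : c (n + 1) = c n + d n := hc n hn
      have hdn1 : d (n + 1) = ((n : ℝ) + 1) * c n + d n := hd n hn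
      have hcp1 : 0 < c (n + 1) := by rw [hcn1]; linarith
      have hdp1 : 0 < d (n + 1) := by
        rw [hdn1]; have : (0:ℝ) ≤ (n:ℝ) := by positivity
        nlinarith
      refine ⟨hcp1, hdp1, ?_, ?_⟩
      · rw [hcn1, hdn1, ← ht2]
        nlinarith [mul_le_mul_of_nonneg_left hlb (le_trans (by linarith) hst),
          mul_pos hcp (lt_of_lt_of_le one_pos hs1), sq_nonneg (t - s),
          mul_le_mul_of_nonneg_right hub (le_of_lt (lt_of_lt_of_le one_pos
            (le_trans hs1 hst)))]
      · rw [hcn1, hdn1, ← ht2]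
        nlinarith [mul_le_mul_of_nonneg_left hlb (le_trans (by linarith) hst),
          mul_pos hcp (lt_of_lt_of_le one_pos hs1), sq_nonneg (t - s),
          mul_le_mul_of_nonneg_right hub (le_of_lt (lt_of_lt_of_le one_pos
            (le_trans hs1 hst)))]
  have h0 : ∀ᶠ n : ℕ in atTop, 0 ≤ c n / d n := by
    filter_upwards [eventually_ge_atTop 1] with n hn
    obtain ⟨hcp, hdp, _, _⟩ := key n hn
    positivity
  have h1 : ∀ᶠ n : ℕ in atTop, c n / d n ≤ 2 / Real.sqrt n := by
    filter_upwards [eventually_ge_atTop 1] with n hn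
    obtain ⟨hcp, hdp, hub, _⟩ := key n hn
    have hs : (0:ℝ) < Real.sqrt n := by
      apply Real.sqrt_pos.mpr; exact_mod_cast Nat.lt_of_lt_of_le Nat.zero_lt_one hn
    rw [div_le_div_iff₀ hdp hs]
    linarith
  have h2 : Tendsto (fun n : ℕ => 2 / Real.sqrt n) atTop (nhds 0) := by
    apply Tendsto.div_atTop tendsto_const_nhds
    have hsq : Tendsto Real.sqrt atTop atTop := by
      apply tendsto_atTop_atTop.mpr
      intro b
      refine ⟨(max b 0) ^ 2, fun a ha => ?_⟩
      calc b ≤ max b 0 := le_max_left _ _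
        _ = Real.sqrt ((max b 0) ^ 2) := (Real.sqrt_sq (le_max_right _ _)).symm
        _ ≤ Real.sqrt a := Real.sqrt_le_sqrt ha
    exact hsq.comp tendsto_natCast_atTop_atTop
  exact squeeze_zero' h0 h1 h2
end

section
/- Define real sequences (a_n)_{n≥1} and (b_n)_{n≥1} by a_1 = b_1 = 1, a_{n+1} = a_n + b_n, and b_{n+1} = a_n + n·b_n for n ≥ 1. Then a_n/b_n → 0 as n → ∞, and moreover the series ∑_{n≥1} a_n/b_{n+1} converges (indeed a_n/b_{n+1} ≤ 2/(n(n-1)) for n ≥ 2). -/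
/-!
By induction `0 < aₙ ≤ bₙ`, so `aₙ₊₁ / bₙ₊₁ = (aₙ + bₙ) / (aₙ + n bₙ) ≤ 2bₙ / (n bₙ) = 2 / n`.
Since also `bₙ₊₁ ≥ n bₙ`, the extra factor gives `aₙ / bₙ₊₁ ≤ (aₙ / bₙ) / n ≤ 2 / (n (n - 1))`,
which is summable by comparison with `4 / n²`.
-/

open Filter

theorem two_div_mul_sub_one_le_four_div_sq {x : ℝ} (hx : 2 ≤ x) :
    2 / (x * (x - 1)) ≤ 4 / x ^ 2 := by
  rw [div_le_div_iff₀ (by nlinarith) (by positivity)]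
  nlinarith

theorem summable_four_div_nat_sq : Summable (fun n : ℕ => 4 / (n : ℝ) ^ 2) :=
  ((Real.summable_one_div_nat_pow.2 one_lt_two).mul_left 4).congr fun _ => mul_one_div _ _

section TowerHeights

variable {a b : ℕ → ℝ}

theorem tower_pos_le (ha1 : a 1 = 1) (hb1 : b 1 = 1)
    (ha : ∀ n, 1 ≤ n → a (n + 1) = a n + b n)
    (hb : ∀ n, 1 ≤ n → b (n + 1) = a n + n * b n) (n : ℕ) (hn : 1 ≤ n) :
    0 < a n ∧ 0 < b n ∧ a n ≤ b n := by
  induction n, hn using Nat.le_induction with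
  | base => simp [ha1, hb1]
  | succ n hn ih =>
    obtain ⟨han, hbn, hab⟩ := ih
    have hn' : (1 : ℝ) ≤ n := by exact_mod_cast hn
    rw [ha n hn, hb n hn]
    refine ⟨by linarith, by nlinarith, by nlinarith⟩

theorem mul_le_tower_succ (hb : ∀ n, 1 ≤ n → b (n + 1) = a n + n * b n) {n : ℕ} (hn : 1 ≤ n)
    (han : 0 ≤ a n) : n * b n ≤ b (n + 1) := by
  rw [hb n hn]
  linarith

theorem tower_ratio_succ_le (ha : ∀ n, 1 ≤ n → a (n + 1) = a n + b n)
    (hb : ∀ n, 1 ≤ n → b (n + 1) = a n + n * b n) {n : ℕ} (hn : 1 ≤ n)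
    (han : 0 < a n) (hab : a n ≤ b n) :
    a (n + 1) / b (n + 1) ≤ 2 / n := by
  have hn' : (1 : ℝ) ≤ n := by exact_mod_cast hn
  have hbn : 0 < b n := han.trans_le hab
  rw [ha n hn, div_le_div_iff₀ (by rw [hb n hn]; positivity) (by positivity)]
  nlinarith [mul_le_tower_succ hb hn han.le]

theorem tower_div_succ_le (ha1 : a 1 = 1) (hb1 : b 1 = 1)
    (ha : ∀ n, 1 ≤ n → a (n + 1) = a n + b n)
    (hb : ∀ n, 1 ≤ n → b (n + 1) = a n + n * b n) (n : ℕ) (hn : 2 ≤ n) :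
    a n / b (n + 1) ≤ 2 / (n * (n - 1)) := by
  obtain ⟨m, rfl⟩ : ∃ m, n = m + 1 := ⟨n - 1, by omega⟩
  obtain ⟨ham, -, habm⟩ := tower_pos_le ha1 hb1 ha hb m (by omega)
  obtain ⟨han, hbn, -⟩ := tower_pos_le ha1 hb1 ha hb (m + 1) (by omega)
  have hratio := tower_ratio_succ_le ha hb (by omega) ham habm
  have hgrowth := mul_le_tower_succ hb (n := m + 1) (by omega) han.le
  have hm : (0 : ℝ) < m := by exact_mod_cast (by omega : 0 < m)
  push_cast at hgrowth ⊢
  calc a (m + 1) / b (m + 1 + 1)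
      ≤ a (m + 1) / ((m + 1) * b (m + 1)) := by gcongr
    _ = a (m + 1) / b (m + 1) / (m + 1) := by field_simp
    _ ≤ 2 / m / (m + 1) := by gcongr
    _ = 2 / ((m + 1) * (m + 1 - 1)) := by rw [add_sub_cancel_right, div_div, mul_comm]

end TowerHeights

/-- For the sequences `a_1 = b_1 = 1`, `a_{n+1} = a_n + b_n`,
`b_{n+1} = a_n + n·b_n`, one has `a_n/b_n → 0`, the series `∑ a_n/b_{n+1}`
converges, and indeed `a_n/b_{n+1} ≤ 2/(n(n-1))` for `n ≥ 2`. -/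
theorem stmt16 (a b : ℕ → ℝ) (ha1 : a 1 = 1) (hb1 : b 1 = 1)
    (ha : ∀ n, 1 ≤ n → a (n + 1) = a n + b n)
    (hb : ∀ n, 1 ≤ n → b (n + 1) = a n + n * b n) :
    Tendsto (fun n => a n / b n) atTop (nhds 0) ∧
    Summable (fun n => a (n + 1) / b (n + 2)) ∧
    ∀ n : ℕ, 2 ≤ n → a n / b (n + 1) ≤ 2 / (n * (n - 1)) := by
  have hpos := tower_pos_le ha1 hb1 ha hb
  have hnonneg (m n : ℕ) (hm : 1 ≤ m) (hn : 1 ≤ n) : 0 ≤ a m / b n :=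
    div_nonneg (hpos m hm).1.le (hpos n hn).2.1.le
  have hbound := tower_div_succ_le ha1 hb1 ha hb
  refine ⟨?_, ?_, hbound⟩
  · refine (tendsto_add_atTop_iff_nat 1).1 <| squeeze_zero' ?_ ?_
      (tendsto_const_div_atTop_nhds_zero_nat 2)
    · exact .of_forall fun n => hnonneg _ _ (by omega) (by omega)
    · filter_upwards [eventually_ge_atTop 1] with n hn
      exact tower_ratio_succ_le ha hb hn (hpos n hn).1 (hpos n hn).2.2
  · refine (summable_nat_add_iff (f := fun n => a n / b (n + 1)) 1).2 <|
      summable_four_div_nat_sq.of_norm_bounded_eventually_nat ?_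
    filter_upwards [eventually_ge_atTop 2] with n hn
    have hn' : (2 : ℝ) ≤ n := by exact_mod_cast hn
    rw [Real.norm_of_nonneg (hnonneg _ _ (by omega) (by omega))]
    exact (hbound n hn).trans (two_div_mul_sub_one_le_four_div_sq hn')
end

section
/- Let A be a finite nonempty set with |A| = d, and for each n ≥ 1 let ν_n be a Borel probability measure on A^ℤ (with the product topology and the product σ-algebra) that is invariant under the left shift S. Then there exist r with 2 ≤ r ≤ d + 1 and a finite word ω = ω_0 ω_1 ⋯ ω_{r-1} over A with ω_0 = ω_{r-1} such that limsup_{n→∞} ν_n([ω]) > 0, where [ω] = { x ∈ A^ℤ : x_i = ω_i for 0 ≤ i ≤ r-1 } is the cylinder set determined by ω. -/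
/-!
Every point of `A^ℤ` lies in exactly one cylinder of length `d + 1` based at `0`, so for each `n`
the `ν_n`-masses of these finitely many cylinders add up to `1`, and one of them, `[v]`, has
positive `limsup`. By pigeonhole `v` repeats a letter, `v a = v b` with `a < b`; the subword
`ω = v_a ⋯ v_b` starts and ends with the same letter, and `[v] ⊆ S^{-a} [ω]`, so shift invariance
gives `ν_n [v] ≤ ν_n [ω]`.
-/

open Filter MeasureTheory Topology
open scoped ENNReal

theorem exists_pos_limsup_of_sum_eq_one {ι α : Type*} [Fintype ι] {l : Filter α} [l.NeBot]
    {f : ι → α → ℝ≥0∞} (h : ∀ a, ∑ i, f i a = 1) : ∃ i, 0 < limsup (f i) l := by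
  by_contra! hf
  have hzero : Tendsto (fun a => ∑ i, f i a) l (𝓝 0) := by
    simpa using tendsto_finsetSum Finset.univ fun i _ =>
      tendsto_of_le_liminf_of_limsup_le (by simp) (hf i)
  simp only [h] at hzero
  exact one_ne_zero (tendsto_nhds_unique tendsto_const_nhds hzero)

section FullShift

variable {A : Type*}

def leftShift (x : ℤ → A) : ℤ → A := fun i => x (i + 1)

theorem leftShift_iterate_apply (m : ℕ) (x : ℤ → A) (i : ℤ) :
    leftShift^[m] x i = x (i + m) := by
  induction m generalizing x with
  | zero => simp
  | succ m ih =>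
    rw [Function.iterate_succ_apply, ih, leftShift]
    push_cast
    ring_nf

def wordCylinder (ω : ℕ → A) (r : ℕ) : Set (ℤ → A) := {x | ∀ i : ℕ, i < r → x i = ω i}

def initialBlock (k : ℕ) (x : ℤ → A) : Fin k → A := fun i => x (i : ℕ)

theorem initialBlock_preimage_subset_wordCylinder {n i r : ℕ} (v : Fin (n + 1) → A)
    (hr : i + r ≤ n + 1) :
    initialBlock (n + 1) ⁻¹' {v} ⊆
      leftShift^[i] ⁻¹' wordCylinder (fun m => v (Fin.ofNat (n + 1) (i + m))) r := by
  rintro x rfl m hm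
  have him : i + m < n + 1 := by omega
  simp only [leftShift_iterate_apply, initialBlock, Fin.val_ofNat, Nat.mod_eq_of_lt him]
  push_cast
  ring_nf

theorem exists_return_word_of_lt {n : ℕ} (v : Fin (n + 1) → A) {a b : Fin (n + 1)} (hab : a < b)
    (hv : v a = v b) : ∃ i r : ℕ, ∃ ω : ℕ → A, 2 ≤ r ∧ r ≤ n + 1 ∧ ω 0 = ω (r - 1) ∧
      initialBlock (n + 1) ⁻¹' {v} ⊆ leftShift^[i] ⁻¹' wordCylinder ω r := by
  have hab' : (a : ℕ) < b := hab
  refine ⟨a, b - a + 1, fun m => v (Fin.ofNat (n + 1) (a + m)), by omega, by omega, ?_,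
    initialBlock_preimage_subset_wordCylinder v (by omega)⟩
  have hb : (a + (b - a + 1 - 1) : ℕ) = (b : ℕ) := by omega
  simp only [add_zero, hb, Fin.ofNat_val_eq_self, hv]

variable [MeasurableSpace A]

theorem measurable_leftShift : Measurable (leftShift (A := A)) :=
  measurable_pi_lambda _ fun i => measurable_pi_apply (i + 1)

theorem measurePreserving_leftShift {μ : Measure (ℤ → A)}
    (h : ∀ E, MeasurableSet E → μ (leftShift ⁻¹' E) = μ E) : MeasurePreserving leftShift μ μ :=
  ⟨measurable_leftShift, Measure.ext fun E hE => by
    rw [Measure.map_apply measurable_leftShift hE, h E hE]⟩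

theorem measurable_initialBlock (k : ℕ) : Measurable (initialBlock (A := A) k) :=
  measurable_pi_lambda _ fun _ => measurable_pi_apply _

variable [MeasurableSingletonClass A]

theorem measurableSet_wordCylinder (ω : ℕ → A) (r : ℕ) : MeasurableSet (wordCylinder ω r) := by
  simp only [wordCylinder, Set.ofPred_forall]
  exact .iInter fun i => .iInter fun _ => measurable_pi_apply _ (measurableSet_singleton _)

theorem sum_measure_initialBlock_preimage [Fintype A] (μ : Measure (ℤ → A))
    [IsProbabilityMeasure μ] (k : ℕ) : ∑ v, μ (initialBlock k ⁻¹' {v}) = 1 := by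
  rw [sum_measure_preimage_singleton _ fun v _ =>
    measurable_initialBlock k (measurableSet_singleton v)]
  simp

end FullShift

theorem stmt17_general {A : Type*} [Fintype A]
    [MeasurableSpace A] [MeasurableSingletonClass A]
    (ν : ℕ → Measure (ℤ → A))
    (hprob : ∀ n, IsProbabilityMeasure (ν n))
    (hinv : ∀ n (E : Set (ℤ → A)), MeasurableSet E →
      ν n ((fun x (i : ℤ) => x (i + 1)) ⁻¹' E) = ν n E) :
    ∃ r : ℕ, 2 ≤ r ∧ r ≤ Fintype.card A + 1 ∧
      ∃ ω : ℕ → A, ω 0 = ω (r - 1) ∧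
        0 < limsup (fun n => ν n {x : ℤ → A | ∀ i : ℕ, i < r → x (i : ℤ) = ω i})
              atTop := by
  obtain ⟨v, hv⟩ := exists_pos_limsup_of_sum_eq_one (l := atTop) fun n =>
    sum_measure_initialBlock_preimage (ν n) (Fintype.card A + 1)
  obtain ⟨a, b, hne, hab⟩ := Fintype.exists_ne_map_eq_of_card_lt v (by simp)
  obtain ⟨i, r, ω, hr₂, hr, hω, hsub⟩ := hne.lt_or_gt.elim
    (exists_return_word_of_lt v · hab) (exists_return_word_of_lt v · hab.symm)
  refine ⟨r, hr₂, hr, ω, hω, hv.trans_le (limsup_le_limsup (.of_forall fun n => ?_))⟩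
  calc ν n (initialBlock _ ⁻¹' {v})
      ≤ ν n (leftShift^[i] ⁻¹' wordCylinder ω r) := measure_mono hsub
    _ = ν n (wordCylinder ω r) :=
      ((measurePreserving_leftShift (hinv n)).iterate i).measure_preimage
        (measurableSet_wordCylinder ω r).nullMeasurableSet

/-- Given shift-invariant Borel probability measures `ν_n` on `A^ℤ`
(with `A` finite, carrying the discrete σ-algebra, and `A^ℤ` the product σ-algebra),
there exist `r` with `2 ≤ r ≤ |A| + 1` and a word `ω_0 ⋯ ω_{r-1}` with
`ω_0 = ω_{r-1}` such that `limsup_n ν_n([ω]) > 0`. -/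
theorem stmt17 {A : Type*} [Fintype A] [Nonempty A]
    [MeasurableSpace A] [MeasurableSingletonClass A]
    (ν : ℕ → Measure (ℤ → A))
    (hprob : ∀ n, IsProbabilityMeasure (ν n))
    (hinv : ∀ n (E : Set (ℤ → A)), MeasurableSet E →
      ν n ((fun x (i : ℤ) => x (i + 1)) ⁻¹' E) = ν n E) :
    ∃ r : ℕ, 2 ≤ r ∧ r ≤ Fintype.card A + 1 ∧
      ∃ ω : ℕ → A, ω 0 = ω (r - 1) ∧
        0 < limsup (fun n => ν n {x : ℤ → A | ∀ i : ℕ, i < r → x (i : ℤ) = ω i})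
              atTop :=
  stmt17_general ν hprob hinv
end

section
/- For every sequence (c_n)_{n≥1} of positive integers there exists a sequence (b_n)_{n≥1} of positive integers such that the series ∑_{i≥1} h_2^{(i)} / (b_i b_{i-1} ⋯ b_1) converges, where the sequences (h_1^{(n)}) and (h_2^{(n)}) are defined by h_1^{(1)} = h_2^{(1)} = 1, h_1^{(n+1)} = b_n h_1^{(n)} + h_2^{(n)}, and h_2^{(n+1)} = c_n h_2^{(n)} + h_1^{(n)} for n ≥ 1. -/
/-!
Choose `b_n` only after `h_2^{(n)}` is known, as `b_n = 2^n h_2^{(n)}`. Since every `b_k ≥ 1`,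
the `i`-th term is at most `h_2^{(i)} / b_i = 2^{-i}`, so the series is dominated by a geometric one.
-/

open Finset

theorem div_prod_Icc_le_half_pow {a b : ℕ → ℝ} (hb : ∀ k, 1 ≤ b k)
    (hab : ∀ k, 2 ^ k * a k ≤ b k) (n : ℕ) :
    a (n + 1) / ∏ k ∈ Icc 1 (n + 1), b k ≤ (1 / 2) ^ (n + 1) := by
  have hb_pos : 0 < b (n + 1) := one_pos.trans_le (hb _)
  have hlast : b (n + 1) ≤ ∏ k ∈ Icc 1 (n + 1), b k := by
    rw [prod_Icc_succ_top (by omega)]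
    exact le_mul_of_one_le_left hb_pos.le (one_le_prod fun k _ => hb k)
  rw [div_le_iff₀ (hb_pos.trans_le hlast)]
  calc a (n + 1) = (1 / 2) ^ (n + 1) * (2 ^ (n + 1) * a (n + 1)) := by
        rw [← mul_assoc, ← mul_pow]; norm_num
    _ ≤ (1 / 2) ^ (n + 1) * ∏ k ∈ Icc 1 (n + 1), b k := by
        gcongr
        exact (hab _).trans hlast

theorem summable_div_prod_Icc_of_two_pow_mul_le {a b : ℕ → ℝ} (ha : ∀ k, 0 ≤ a k)
    (hb : ∀ k, 1 ≤ b k) (hab : ∀ k, 2 ^ k * a k ≤ b k) :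
    Summable fun n => a (n + 1) / ∏ k ∈ Icc 1 (n + 1), b k :=
  Summable.of_nonneg_of_le
    (fun _ => div_nonneg (ha _) (prod_nonneg fun k _ => zero_le_one.trans (hb k)))
    (div_prod_Icc_le_half_pow hb hab)
    (summable_geometric_two.comp_injective (add_left_injective 1))

/-- `(h_1^{(n)}, h_2^{(n)})` for `b_n = doublingBase c n`; the value at index `0` is a placeholder. -/
def doublingHeights (c : ℕ → ℕ) : ℕ → ℕ × ℕ
  | 0 => (1, 1)
  | 1 => (1, 1)
  | n + 2 =>
    let h := doublingHeights c (n + 1)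
    (2 ^ (n + 1) * h.2 * h.1 + h.2, c (n + 1) * h.2 + h.1)

def doublingBase (c : ℕ → ℕ) (n : ℕ) : ℕ := 2 ^ n * (doublingHeights c n).2

theorem doublingHeights_add_two (c : ℕ → ℕ) (n : ℕ) :
    doublingHeights c (n + 2) =
      (doublingBase c (n + 1) * (doublingHeights c (n + 1)).1 + (doublingHeights c (n + 1)).2,
        c (n + 1) * (doublingHeights c (n + 1)).2 + (doublingHeights c (n + 1)).1) := by
  rw [doublingHeights, doublingBase]

theorem doublingHeights_pos (c : ℕ → ℕ) :
    ∀ n, 0 < (doublingHeights c n).1 ∧ 0 < (doublingHeights c n).2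
  | 0 => by simp [doublingHeights]
  | 1 => by simp [doublingHeights]
  | n + 2 => by
    have ih := doublingHeights_pos c (n + 1)
    exact ⟨Nat.add_pos_right _ ih.2, Nat.add_pos_right _ ih.1⟩

theorem doublingBase_pos (c : ℕ → ℕ) (n : ℕ) : 0 < doublingBase c n :=
  Nat.mul_pos (Nat.two_pow_pos n) (doublingHeights_pos c n).2

theorem stmt19_general (c : ℕ → ℕ) :
    ∃ b : ℕ → ℕ, (∀ n, 0 < b n) ∧
      ∃ h1 h2 : ℕ → ℕ,
        h1 1 = 1 ∧ h2 1 = 1 ∧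
        (∀ n, 1 ≤ n → h1 (n + 1) = b n * h1 n + h2 n ∧
                      h2 (n + 1) = c n * h2 n + h1 n) ∧
        Summable (fun i => (h2 (i + 1) : ℝ) / ∏ k ∈ Finset.Icc 1 (i + 1), (b k : ℝ)) := by
  refine ⟨doublingBase c, doublingBase_pos c, fun n => (doublingHeights c n).1,
    fun n => (doublingHeights c n).2, rfl, rfl, ?_, ?_⟩
  · rintro n hn
    obtain ⟨m, rfl⟩ := Nat.exists_eq_add_of_le' hn
    simp only [doublingHeights_add_two, and_self]
  · refine summable_div_prod_Icc_of_two_pow_mul_le (a := fun n => ((doublingHeights c n).2 : ℝ))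
      (b := fun n => (doublingBase c n : ℝ)) (fun k => Nat.cast_nonneg _)
      (fun k => Nat.one_le_cast.mpr (doublingBase_pos c k)) (fun k => ?_)
    simp [doublingBase]

/-- For every sequence `(c_n)` of positive integers there is a
sequence `(b_n)` of positive integers such that
`∑_{i≥1} h_2^{(i)} / (b_i ⋯ b_1)` converges, where `h_1^{(1)} = h_2^{(1)} = 1`,
`h_1^{(n+1)} = b_n h_1^{(n)} + h_2^{(n)}` and `h_2^{(n+1)} = c_n h_2^{(n)} + h_1^{(n)}`. -/
theorem stmt19 (c : ℕ → ℕ) (hc : ∀ n, 0 < c n) :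
    ∃ b : ℕ → ℕ, (∀ n, 0 < b n) ∧
      ∃ h1 h2 : ℕ → ℕ,
        h1 1 = 1 ∧ h2 1 = 1 ∧
        (∀ n, 1 ≤ n → h1 (n + 1) = b n * h1 n + h2 n ∧
                      h2 (n + 1) = c n * h2 n + h1 n) ∧
        Summable (fun i => (h2 (i + 1) : ℝ) / ∏ k ∈ Finset.Icc 1 (i + 1), (b k : ℝ)) :=
  stmt19_general c
end
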